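/- arXiv:0903.5152 — 3 statements merged into one kernel-verified Lean document; each statement's English description precedes it below -/
import Mathlib

section
/- For every polytope P there is a unique family of polynomials g(E,F,t) ∈ Z[t], indexed by pairs of faces F ≤ E of P, such that for all faces F ≤ E of P one has Σ_{F ≤ D ≤ E} g(D,F,t)·g([D,E]*,t) = g(𝒫(E)*,t), where the sum runs over all faces D of P with F ≤ D ≤ E. -/
/-- τ_{<d/2}: the truncation operator keeping terms of degree `i` with `2*i < d`. -/
noncomputable def truncHalf (d : ℕ) (p : Polynomial ℤ) : Polynomial ℤ :=
  ∑ i ∈ Finset.range ((d + 1) / 2), Polynomial.C (p.coeff i) * Polynomial.X ^ i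

open Classical Polynomial in
/-- Fuel-based auxiliary for the Stanley `g`-polynomial of the interval `[x,y]`
in a (graded) poset with rank function `ρ`.  For a graded interval, fuel
`ρ y - ρ x` suffices. -/
noncomputable def gAux {α : Type*} [PartialOrder α] (ρ : α → ℕ) :
    ℕ → α → α → Polynomial ℤ
  | 0, _, _ => 1
  | n + 1, x, y =>
    if x = y then 1
    else truncHalf (ρ y - ρ x)
      ((1 - X) * ∑ᶠ z ∈ {z : α | x < z ∧ z ≤ y}, (X - 1) ^ (ρ z - ρ x - 1) * gAux ρ n z y)

/-- Stanley's `g`-polynomial of the interval `[x,y]` in a graded poset with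
rank function `ρ`. -/
noncomputable def gPoly {α : Type*} [PartialOrder α] (ρ : α → ℕ) (x y : α) : Polynomial ℤ :=
  gAux ρ (ρ y - ρ x) x y

open Classical Polynomial in
/-- Stanley's `h`-polynomial of the interval `[x,y]` in a graded poset with
rank function `ρ`. -/
noncomputable def hPoly {α : Type*} [PartialOrder α] (ρ : α → ℕ) (x y : α) : Polynomial ℤ :=
  if x = y then 1
  else ∑ᶠ z ∈ {z : α | x < z ∧ z ≤ y}, (X - 1) ^ (ρ z - ρ x - 1) * gPoly ρ z y

/-- The `g`-polynomial of the *dual* of the interval `[x,y]`. -/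
noncomputable def gPolyDual {α : Type*} [PartialOrder α] (ρ : α → ℕ) (x y : α) : Polynomial ℤ :=
  gPoly (α := αᵒᵈ) (fun z => ρ y - ρ (OrderDual.ofDual z))
    (OrderDual.toDual y) (OrderDual.toDual x)

open Pointwise

/-- The set of lattice points `ℤ^n ⊆ ℝ^n`. -/
def latticePts (n : ℕ) : Set (Fin n → ℝ) := {x | ∀ i, ∃ m : ℤ, x i = (m : ℝ)}

/-- A lattice polytope: the convex hull of finitely many lattice points
(the empty set is allowed). -/
def IsLatticePolytope {n : ℕ} (P : Set (Fin n → ℝ)) : Prop :=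
  ∃ V : Finset (Fin n → ℝ), (V : Set (Fin n → ℝ)) ⊆ latticePts n ∧
    P = convexHull ℝ (V : Set (Fin n → ℝ))

open Classical in
/-- The dimension of a polytope: `-1` for the empty set, otherwise the
dimension of the smallest affine subspace containing it. -/
noncomputable def polyDim {n : ℕ} (P : Set (Fin n → ℝ)) : ℤ :=
  if P = ∅ then -1 else (Module.finrank ℝ (affineSpan ℝ P).direction : ℤ)

/-- `F` is a face of `P`: `F = P`, `F = ∅`, or `F = P ∩ H` for a hyperplane `H`
such that `P` lies in one of the two closed halfspaces bounded by `H`. -/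
def IsFaceOf {n : ℕ} (P F : Set (Fin n → ℝ)) : Prop :=
  F = P ∨ F = ∅ ∨ ∃ (ℓ : (Fin n → ℝ) →ₗ[ℝ] ℝ) (c : ℝ), ℓ ≠ 0 ∧
    (∀ x ∈ P, ℓ x ≤ c) ∧ F = {x ∈ P | ℓ x = c}

/-- The Ehrhart series `1 + Σ_{m>0} |mP ∩ ℤ^n| t^m` of `P`. -/
noncomputable def ehrhartSeries {n : ℕ} (P : Set (Fin n → ℝ)) : PowerSeries ℤ :=
  PowerSeries.mk fun m => if m = 0 then 1 else ((((m : ℝ) • P) ∩ latticePts n).ncard : ℤ)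

open Classical in
/-- The `h*`-polynomial of a lattice polytope `P` of dimension `d`, i.e. the
numerator of the Ehrhart series `h*_P(t)/(1-t)^{d+1}`; `h*_∅ = 1`. -/
noncomputable def hStar {n : ℕ} (P : Set (Fin n → ℝ)) : Polynomial ℤ :=
  if P = ∅ then 1
  else
    ∑ i ∈ Finset.range ((polyDim P).toNat + 1),
      Polynomial.C ((PowerSeries.coeff i)
        ((1 - PowerSeries.X) ^ ((polyDim P).toNat + 1) * ehrhartSeries P)) * Polynomial.X ^ i

/-- `F` belongs to the closed star neighbourhood `star_{∂P}(p)`: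
`F` is a face of `P` contained in a proper face `Q` of `P` with `p ∈ Q`. -/
def InStar {n : ℕ} (P : Set (Fin n → ℝ)) (p : Fin n → ℝ) (F : Set (Fin n → ℝ)) : Prop :=
  IsFaceOf P F ∧ ∃ Q, IsFaceOf P Q ∧ Q ≠ P ∧ p ∈ Q ∧ F ⊆ Q

/-- `P` is a lattice pyramid over its facet `F`: some affine transformation `A`
of `ℝ^n` with `A(ℤ^n) = ℤ^n` maps `F` into a coordinate hyperplane `{x_i = 0}`
and maps `P` onto the convex hull of `A(F)` and the `i`-th unit vector. -/
def IsLatticePyramidOver {n : ℕ} (P F : Set (Fin n → ℝ)) : Prop :=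
  ∃ (A : (Fin n → ℝ) ≃ᵃ[ℝ] (Fin n → ℝ)) (i : Fin n),
    (⇑A) '' latticePts n = latticePts n ∧
    (∀ x ∈ F, A x i = 0) ∧
    (⇑A) '' P = convexHull ℝ (((⇑A) '' F) ∪ {fun j => if j = i then (1 : ℝ) else 0})

/-- The faces of `P`, as a partially ordered set (ordered by inclusion). -/
abbrev Faces {n : ℕ} (P : Set (Fin n → ℝ)) : Type _ := {G : Set (Fin n → ℝ) // IsFaceOf P G}

/-- `P` as the top element of its face poset. -/
def topFace {n : ℕ} (P : Set (Fin n → ℝ)) : Faces P := ⟨P, Or.inl rfl⟩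

/-- `∅` as the bottom element of the face poset of `P`. -/
def botFace {n : ℕ} (P : Set (Fin n → ℝ)) : Faces P := ⟨∅, Or.inr (Or.inl rfl)⟩

/-- The rank function `ρ(F) = dim F + 1` of the face poset. -/
noncomputable def faceRank {n : ℕ} {P : Set (Fin n → ℝ)} (F : Faces P) : ℕ :=
  (polyDim F.1 + 1).toNat

/-- `S̃(P,Q,t) = Σ_{Q ⊆ F} (-1)^{dim P - dim F} h*_F(t) g([F,P],t)`, the sum
running over all faces `F` of `P` containing `Q` (including `F = P`). -/
noncomputable def tildeS {n : ℕ} (P Q : Set (Fin n → ℝ)) : Polynomial ℤ :=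
  ∑ᶠ F ∈ {F : Faces P | Q ⊆ F.1},
    (-1 : Polynomial ℤ) ^ (polyDim P - polyDim F.1).toNat *
      (hStar F.1 * gPoly faceRank F (topFace P))

/-- `S̃(P,𝓘,t) = Σ_{F ∉ 𝓘} (-1)^{dim P - dim F} h*_F(t) g([F,P],t)`, the sum
running over all faces `F` of `P` not belonging to the order ideal `𝓘`. -/
noncomputable def tildeSIdeal {n : ℕ} (P : Set (Fin n → ℝ))
    (I : Set (Set (Fin n → ℝ))) : Polynomial ℤ :=
  ∑ᶠ F ∈ {F : Faces P | F.1 ∉ I},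
    (-1 : Polynomial ℤ) ^ (polyDim P - polyDim F.1).toNat *
      (hStar F.1 * gPoly faceRank F (topFace P))
/-- `gr` is a family of relative `g`-polynomials for the faces of `P`:
for all faces `F ≤ E` of `P`,
`Σ_{F ≤ D ≤ E} gr(D,F)·g([D,E]*,t) = g(𝒫(E)*,t) = g([∅,E]*,t)`. -/
def RelGProp {n : ℕ} (P : Set (Fin n → ℝ))
    (gr : Faces P → Faces P → Polynomial ℤ) : Prop :=
  ∀ F E : Faces P, F ≤ E →
    ∑ᶠ D ∈ {D : Faces P | F ≤ D ∧ D ≤ E}, gr D F * gPolyDual faceRank D E =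
      gPolyDual faceRank (botFace P) E



open Classical in
private noncomputable def grAux {α : Type*} [PartialOrder α] [Finite α]
    (k : α → α → Polynomial ℤ) (b : α → Polynomial ℤ) (F : α) : α → Polynomial ℤ :=
  (Finite.to_wellFoundedLT (α := α)).wf.fix fun E rec =>
    b E - ∑ᶠ D : α, if h : F ≤ D ∧ D < E then rec D h.2 * k D E else 0

open Classical in
private lemma grAux_eq {α : Type*} [PartialOrder α] [Finite α]
    (k : α → α → Polynomial ℤ) (b : α → Polynomial ℤ) (F E : α) :
    grAux k b F E = b E - ∑ᶠ D ∈ {D : α | F ≤ D ∧ D < E}, grAux k b F D * k D E := by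
  rw [grAux, WellFounded.fix_eq, ← grAux]
  congr 1
  rw [finsum_mem_def]
  apply finsum_congr
  intro D
  rw [Set.indicator_apply]
  by_cases h : F ≤ D ∧ D < E <;> simp [h, Set.mem_setOf_eq]

private lemma sum_split {α : Type*} [PartialOrder α] [Finite α] (F E : α) (hFE : F ≤ E)
    (f : α → Polynomial ℤ) :
    ∑ᶠ D ∈ {D : α | F ≤ D ∧ D ≤ E}, f D =
      f E + ∑ᶠ D ∈ {D : α | F ≤ D ∧ D < E}, f D := by
  have hset : {D : α | F ≤ D ∧ D ≤ E} = insert E {D : α | F ≤ D ∧ D < E} := by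
    ext D
    simp only [Set.mem_setOf_eq, Set.mem_insert_iff]
    constructor
    · rintro ⟨h1, h2⟩
      rcases eq_or_lt_of_le h2 with h | h
      · exact Or.inl h
      · exact Or.inr ⟨h1, h⟩
    · rintro (rfl | ⟨h1, h2⟩)
      · exact ⟨hFE, le_refl _⟩
      · exact ⟨h1, le_of_lt h2⟩
  rw [hset, finsum_mem_insert f (by simp) (Set.toFinite _)]

private lemma exists_unique_rel {α : Type*} [PartialOrder α] [Finite α]
    (k : α → α → Polynomial ℤ) (hk : ∀ E, k E E = 1) (b : α → Polynomial ℤ) :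
    ∃ gr : α → α → Polynomial ℤ,
      (∀ F E : α, F ≤ E → ∑ᶠ D ∈ {D : α | F ≤ D ∧ D ≤ E}, gr D F * k D E = b E) ∧
      ∀ gr' : α → α → Polynomial ℤ,
        (∀ F E : α, F ≤ E → ∑ᶠ D ∈ {D : α | F ≤ D ∧ D ≤ E}, gr' D F * k D E = b E) →
        ∀ F E : α, F ≤ E → gr' E F = gr E F := by
  refine ⟨fun E F => grAux k b F E, ?_, ?_⟩
  · intro F E hFE
    rw [sum_split F E hFE, hk, mul_one]
    simp only
    rw [grAux_eq]
    ring
  · intro gr' h'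
    have main : ∀ E F : α, F ≤ E → gr' E F = grAux k b F E := by
      intro E
      induction E using WellFoundedLT.induction with
      | _ E IH =>
        intro F hFE
        have h1 := h' F E hFE
        rw [sum_split F E hFE, hk, mul_one] at h1
        have h2 : ∑ᶠ D ∈ {D : α | F ≤ D ∧ D < E}, gr' D F * k D E
            = ∑ᶠ D ∈ {D : α | F ≤ D ∧ D < E}, grAux k b F D * k D E := by
          apply finsum_mem_congr rfl
          rintro D ⟨hFD, hDE⟩
          rw [IH D hDE F hFD]
        rw [h2] at h1
        rw [grAux_eq]
        exact eq_sub_of_add_eq h1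
    intro F E h; exact main E F h

private lemma face_hull {n : ℕ} {V : Finset (Fin n → ℝ)} {F : Set (Fin n → ℝ)}
    (hF : IsFaceOf (convexHull ℝ (V : Set (Fin n → ℝ))) F) :
    F = convexHull ℝ ((V : Set (Fin n → ℝ)) ∩ F) := by
  rcases hF with rfl | rfl | ⟨ℓ, c, -, hle, rfl⟩
  · rw [Set.inter_eq_left.mpr (subset_convexHull ℝ _)]
  · simp
  · set P := convexHull ℝ (V : Set (Fin n → ℝ)) with hP
    apply Set.Subset.antisymm
    · rintro x ⟨hxP, hxc⟩
      rw [hP, Finset.convexHull_eq] at hxP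
      obtain ⟨w, hw0, hw1, hwx⟩ := hxP
      rw [Finset.centerMass_eq_of_sum_1 _ _ hw1] at hwx
      simp only [id] at hwx
      -- each vertex with positive weight satisfies ℓ v = c
      have hVP : (V : Set (Fin n → ℝ)) ⊆ P := subset_convexHull ℝ _
      have hsum0 : ∑ v ∈ V, w v * (c - ℓ v) = 0 := by
        have : ℓ x = ∑ v ∈ V, w v * ℓ v := by
          rw [← hwx, map_sum]; simp [map_smul, smul_eq_mul]
        simp only [mul_sub]
        rw [Finset.sum_sub_distrib, ← Finset.sum_mul, hw1, one_mul, ← this, hxc]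
        ring
      have hkey : ∀ v ∈ V, w v ≠ 0 → ℓ v = c := by
        intro v hv hwv
        have := (Finset.sum_eq_zero_iff_of_nonneg (fun v hv =>
          mul_nonneg (hw0 v hv) (sub_nonneg.mpr (hle v (hVP hv))))).mp hsum0 v hv
        rcases mul_eq_zero.mp this with h | h
        · exact absurd h hwv
        · linarith [sub_eq_zero.mp h]
      -- restrict to t
      classical
      set t := V.filter fun v => ℓ v = c with ht
      have hwt : ∀ v ∈ V, v ∉ t → w v = 0 := by
        intro v hv hvt
        by_contra hwv
        exact hvt (Finset.mem_filter.mpr ⟨hv, hkey v hv hwv⟩)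
      have hts : (t : Set (Fin n → ℝ)) ⊆ (V : Set (Fin n → ℝ)) ∩ {x ∈ P | ℓ x = c} := by
        intro v hv
        obtain ⟨hv1, hv2⟩ := Finset.mem_filter.mp hv
        exact ⟨hv1, hVP hv1, hv2⟩
      have h1 : ∑ v ∈ t, w v = 1 := by
        rw [← hw1]
        exact (Finset.sum_subset (Finset.filter_subset _ _) hwt).symm ▸ rfl
      have h2 : ∑ v ∈ t, w v • v = x := by
        rw [← hwx]
        exact Finset.sum_subset (Finset.filter_subset _ _)
          (fun v hv hvt => by rw [hwt v hv hvt, zero_smul])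
      have : x ∈ convexHull ℝ (t : Set (Fin n → ℝ)) := by
        have := t.centerMass_mem_convexHull (s := (t : Set (Fin n → ℝ)))
          (fun v hv => hw0 v (Finset.filter_subset _ _ hv))
          (by rw [h1]; norm_num) (fun v hv => Finset.mem_coe.mpr hv)
        rw [Finset.centerMass_eq_of_sum_1 _ _ h1] at this
        rwa [h2] at this
      exact convexHull_mono hts this
    · apply convexHull_min Set.inter_subset_right
      exact (convex_convexHull ℝ _).inter ((convex_singleton c).linear_preimage ℓ)

private lemma finite_faces {n : ℕ} (V : Finset (Fin n → ℝ)) :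
    Finite (Faces (convexHull ℝ (V : Set (Fin n → ℝ)))) := by
  apply Finite.of_injective
    (f := fun F : Faces (convexHull ℝ (V : Set (Fin n → ℝ))) =>
      ({v : {x // x ∈ V} | (v : Fin n → ℝ) ∈ F.1} : Set {x // x ∈ V}))
  intro F G h
  apply Subtype.ext
  rw [face_hull F.2, face_hull G.2]
  congr 1
  ext x
  simp only [Set.mem_inter_iff, Finset.mem_coe]
  constructor
  · rintro ⟨hxV, hxF⟩
    refine ⟨hxV, ?_⟩
    have := Set.ext_iff.mp h ⟨x, hxV⟩
    exact this.mp hxF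
  · rintro ⟨hxV, hxG⟩
    refine ⟨hxV, ?_⟩
    have := Set.ext_iff.mp h ⟨x, hxV⟩
    exact this.mpr hxG

private lemma gPolyDual_self {n : ℕ} {P : Set (Fin n → ℝ)} (E : Faces P) :
    gPolyDual faceRank E E = 1 := by
  simp [gPolyDual, gPoly, gAux]

/-- **Proposition 2.6 (Braden–MacPherson).** For every polytope `P` there is a
family of polynomials `g(E,F,t)`, indexed by pairs of faces `F ≤ E` of `P`, such
that for all faces `F ≤ E` one has
`Σ_{F ≤ D ≤ E} g(D,F,t)·g([D,E]*,t) = g(𝒫(E)*,t)`; moreover this family is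
unique (on pairs `F ≤ E`). -/
theorem relative_g_exists_unique {n : ℕ} (P : Set (Fin n → ℝ))
    (hP : ∃ V : Finset (Fin n → ℝ), P = convexHull ℝ (V : Set (Fin n → ℝ))) :
    ∃ gr : Faces P → Faces P → Polynomial ℤ,
      RelGProp P gr ∧
        ∀ gr' : Faces P → Faces P → Polynomial ℤ, RelGProp P gr' →
          ∀ F E : Faces P, F ≤ E → gr' E F = gr E F := by
  obtain ⟨V, rfl⟩ := hP
  have : Finite (Faces (convexHull ℝ (V : Set (Fin n → ℝ)))) := finite_faces V
  obtain ⟨gr, hgr, huniq⟩ := exists_unique_rel (α := Faces (convexHull ℝ (V : Set (Fin n → ℝ))))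
    (fun D E => gPolyDual faceRank D E) (fun E => gPolyDual_self E)
    (fun E => gPolyDual faceRank (botFace _) E)
  exact ⟨gr, hgr, huniq⟩
end

section
/- Let 𝒫 be an Eulerian poset of rank d > 0. Then h(𝒫,t) = t^{d−1}·h(𝒫,t^{−1}); that is, writing h(𝒫,t) = Σ_{i=0}^{d−1} h_i t^i, one has h_i = h_{d−1−i} for all i. -/
namespace StanleyAux
open Polynomial
open scoped Classical

lemma truncHalf_coeff (d : ℕ) (p : ℤ[X]) (i : ℕ) :
    (truncHalf d p).coeff i = if i < (d + 1) / 2 then p.coeff i else 0 := by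
  classical
  simp only [truncHalf, finset_sum_coeff, coeff_C_mul, coeff_X_pow, mul_ite, mul_one, mul_zero]
  rw [Finset.sum_ite_eq (Finset.range ((d+1)/2)) i (fun j => p.coeff j)]
  simp [Finset.mem_range]

lemma truncHalf_natDegree_le (d : ℕ) (p : ℤ[X]) : (truncHalf d p).natDegree ≤ d := by
  refine natDegree_sum_le_of_forall_le _ _ fun i hi => ?_
  have hi' : i ≤ d := by have := Finset.mem_range.mp hi; omega
  exact le_trans (natDegree_C_mul_le _ _) (by simpa using hi')

lemma natDegree_X_sub_one : ((X : ℤ[X]) - 1).natDegree = 1 := by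
  simpa using natDegree_X_sub_C (1 : ℤ)

lemma natDegree_one_sub_X : ((1 : ℤ[X]) - X).natDegree = 1 := by
  have h : ((1 : ℤ[X]) - X) = -(X - 1) := by ring
  rw [h, natDegree_neg, natDegree_X_sub_one]

lemma reflect_sub (N : ℕ) (f g : ℤ[X]) :
    reflect N (f - g) = reflect N f - reflect N g := by
  ext i; simp [coeff_reflect]

lemma reflect_sum {ι : Type*} (s : Finset ι) (f : ι → ℤ[X]) (N : ℕ) :
    reflect N (∑ i ∈ s, f i) = ∑ i ∈ s, reflect N (f i) := by
  classical
  induction s using Finset.induction with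
  | empty => simp
  | @insert a s h ih => rw [Finset.sum_insert h, Finset.sum_insert h, reflect_add, ih]

lemma reflect_one_X_sub_one : reflect 1 ((X : ℤ[X]) - 1) = 1 - X := by
  have h : ((X : ℤ[X]) - 1) = X ^ 1 - X ^ 0 := by ring
  rw [h, reflect_sub, reflect_monomial, reflect_monomial]
  norm_num

lemma reflect_pow_X_sub_one (k : ℕ) :
    reflect k (((X : ℤ[X]) - 1) ^ k) = (1 - X) ^ k := by
  induction k with
  | zero => simp
  | succ k ih =>
    have hd : (((X : ℤ[X]) - 1) ^ k).natDegree ≤ k :=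
      le_trans natDegree_pow_le (by rw [natDegree_X_sub_one, mul_one])
    have hd1 : ((X : ℤ[X]) - 1).natDegree ≤ 1 := le_of_eq natDegree_X_sub_one
    rw [pow_succ, reflect_mul _ _ hd hd1, ih, reflect_one_X_sub_one, ← pow_succ]

variable {α : Type*} [PartialOrder α] [Fintype α]

lemma rho_lt_of_lt (ρ : α → ℕ) (hcov : ∀ x y : α, x ⋖ y → ρ y = ρ x + 1) :
    ∀ y x : α, x < y → ρ x < ρ y := by
  intro y
  induction y using WellFoundedLT.induction with
  | ind y IH =>
    intro x hxy
    have hne : (Finset.univ.filter fun z => x ≤ z ∧ z < y).Nonempty :=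
      ⟨x, by simp [hxy]⟩
    obtain ⟨z, hzm⟩ := Finset.exists_maximal hne
    have hz : z ∈ Finset.univ.filter fun z => x ≤ z ∧ z < y := hzm.1
    have hmax : ∀ w ∈ Finset.univ.filter (fun z => x ≤ z ∧ z < y), ¬ z < w :=
      fun w hw hzw => lt_irrefl z (lt_of_lt_of_le hzw (hzm.2 hw hzw.le))
    simp only [Finset.mem_filter, Finset.mem_univ, true_and] at hz
    have hcv : z ⋖ y :=
      ⟨hz.2, fun w hzw hwy => hmax w (by
        simp only [Finset.mem_filter, Finset.mem_univ, true_and]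
        exact ⟨le_trans hz.1 hzw.le, hwy⟩) hzw⟩
    have hr := hcov z y hcv
    rcases eq_or_lt_of_le hz.1 with h | h
    · rw [h]; omega
    · have := IH z hz.2 x h; omega

lemma rho_le_of_le (ρ : α → ℕ) (hs : ∀ x y : α, x < y → ρ x < ρ y)
    {x y : α} (h : x ≤ y) : ρ x ≤ ρ y := by
  rcases eq_or_lt_of_le h with rfl | h
  · exact le_rfl
  · exact (hs x y h).le

lemma finsum_mem_setOf_eq (f : α → ℤ[X]) (P : α → Prop) :
    ∑ᶠ z ∈ {z : α | P z}, f z = ∑ z ∈ Finset.univ.filter (fun z => P z), f z := by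
  rw [← finsum_mem_coe_finset]
  congr 1
  ext z; simp

lemma hPoly_eq_sum (ρ : α → ℕ) (x y : α) (hxy : x ≠ y) :
    hPoly ρ x y = ∑ z ∈ Finset.univ.filter (fun z => x < z ∧ z ≤ y),
      (X - 1) ^ (ρ z - ρ x - 1) * gPoly ρ z y := by
  rw [hPoly, if_neg hxy, finsum_mem_setOf_eq]
  exact Finset.sum_congr (Finset.filter_congr_decidable _ _ _) fun _ _ => rfl

lemma gPoly_self (ρ : α → ℕ) (x : α) : gPoly ρ x x = 1 := by
  simp [gPoly, Nat.sub_self, gAux]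

lemma gAux_eq (ρ : α → ℕ) (hs : ∀ x y : α, x < y → ρ x < ρ y) :
    ∀ n, ∀ x y : α, x ≤ y → ρ y - ρ x ≤ n → gAux ρ n x y = gPoly ρ x y := by
  intro n
  induction n using Nat.strong_induction_on with
  | _ n IH =>
    intro x y hxy hle
    rcases eq_or_lt_of_le hxy with rfl | hlt
    · cases n with
      | zero => simp [gPoly, Nat.sub_self, gAux]
      | succ n => simp [gPoly, Nat.sub_self, gAux]
    · have hρ := hs x y hlt
      obtain ⟨m, rfl⟩ : ∃ m, n = m + 1 := ⟨n - 1, by omega⟩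
      obtain ⟨k, hk⟩ : ∃ k, ρ y - ρ x = k + 1 := ⟨ρ y - ρ x - 1, by omega⟩
      have hne : x ≠ y := ne_of_lt hlt
      rw [gPoly, hk]
      simp only [gAux, if_neg hne]
      congr 2
      refine finsum_mem_congr rfl fun z hz => ?_
      obtain ⟨hxz, hzy⟩ : x < z ∧ z ≤ y := hz
      have hρz := hs x z hxz
      have hzyρ : ρ z ≤ ρ y := rho_le_of_le ρ hs hzy
      rw [IH m (by omega) z y hzy (by omega), IH k (by omega) z y hzy (by omega)]

lemma gPoly_eq (ρ : α → ℕ) (hs : ∀ x y : α, x < y → ρ x < ρ y)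
    (x y : α) (hxy : x < y) :
    gPoly ρ x y = truncHalf (ρ y - ρ x) ((1 - X) * hPoly ρ x y) := by
  have hρ := hs x y hxy
  obtain ⟨k, hk⟩ : ∃ k, ρ y - ρ x = k + 1 := ⟨ρ y - ρ x - 1, by omega⟩
  rw [gPoly, hk]
  simp only [gAux, if_neg (ne_of_lt hxy)]
  rw [hPoly, if_neg (ne_of_lt hxy), hk]
  congr 2
  refine finsum_mem_congr rfl fun z hz => ?_
  obtain ⟨hxz, hzy⟩ : x < z ∧ z ≤ y := hz
  have hρz := hs x z hxz
  have hzyρ : ρ z ≤ ρ y := rho_le_of_le ρ hs hzy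
  rw [gAux_eq ρ hs k z y hzy (by omega)]

lemma gPoly_natDegree_le (ρ : α → ℕ) (hs : ∀ x y : α, x < y → ρ x < ρ y)
    (x y : α) (hxy : x ≤ y) : (gPoly ρ x y).natDegree ≤ ρ y - ρ x := by
  rcases eq_or_lt_of_le hxy with rfl | h
  · simp [gPoly_self]
  · rw [gPoly_eq ρ hs x y h]
    exact truncHalf_natDegree_le _ _

lemma star (ρ : α → ℕ) (hs : ∀ x y : α, x < y → ρ x < ρ y)
    (z y : α) (hzy : z < y)
    (hdeg : (hPoly ρ z y).natDegree ≤ (ρ y - ρ z) - 1)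
    (hsym : reflect ((ρ y - ρ z) - 1) (hPoly ρ z y) = hPoly ρ z y) :
    reflect (ρ y - ρ z) (gPoly ρ z y) = gPoly ρ z y - (1 - X) * hPoly ρ z y := by
  set m := ρ y - ρ z with hm
  have hm1 : 1 ≤ m := by have := hs z y hzy; omega
  set h := hPoly ρ z y with hh
  set u : ℤ[X] := (1 - X) * h with hu
  have hdu : u.natDegree ≤ m := by
    refine le_trans natDegree_mul_le ?_
    rw [natDegree_one_sub_X]
    omega
  have hanti : reflect m u = -u := by
    have h1 : m = 1 + (m - 1) := by omega
    rw [hu, h1, reflect_mul _ _ (le_of_eq natDegree_one_sub_X) hdeg, hsym]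
    have h2 : reflect 1 ((1 : ℤ[X]) - X) = X - 1 := by
      have e : ((1 : ℤ[X]) - X) = X ^ 0 - X ^ 1 := by ring
      rw [e, reflect_sub, reflect_monomial, reflect_monomial]
      norm_num
    rw [h2]; ring
  have hcu : ∀ i, u.coeff (revAt m i) = -u.coeff i := by
    intro i
    have := congrArg (fun p => p.coeff i) hanti
    simpa [coeff_reflect] using this
  have hg : gPoly ρ z y = truncHalf m u := by
    rw [gPoly_eq ρ hs z y hzy]
  rw [hg]
  ext i
  simp only [coeff_sub, coeff_reflect, truncHalf_coeff]
  by_cases him : m < i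
  · rw [revAt_eq_self_of_lt him]
    have hi0 : u.coeff i = 0 := coeff_eq_zero_of_natDegree_lt (lt_of_le_of_lt hdu him)
    have hcond : ¬ (i < (m + 1) / 2) := by omega
    simp [hcond, hi0]
  · push_neg at him
    rw [revAt_le him]
    have hkey : u.coeff (m - i) = -u.coeff i := by
      rw [← revAt_le him]; exact hcu i
    by_cases h1 : i < (m + 1) / 2
    · have h2 : ¬ (m - i < (m + 1) / 2) := by omega
      simp [h1, h2]
    · by_cases h2 : m - i < (m + 1) / 2
      · simp [h1, h2, hkey]
      · have h3 : m - i = i := by omega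
        rw [h3] at hkey
        have h4 : u.coeff i = 0 := by linarith
        simp [h1, h2, h4]

lemma euler_sum (ρ : α → ℕ)
    (hE : ∀ x y : α, x < y →
      {z : α | x ≤ z ∧ z ≤ y ∧ Even (ρ z)}.ncard =
      {z : α | x ≤ z ∧ z ≤ y ∧ ¬ Even (ρ z)}.ncard)
    (x w : α) (hxw : x < w) :
    ∑ z ∈ Finset.univ.filter (fun z => x ≤ z ∧ z ≤ w), ((-1 : ℤ) ^ ρ z) = 0 := by
  classical
  have key := hE x w hxw
  have e1 : {z : α | x ≤ z ∧ z ≤ w ∧ Even (ρ z)}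
      = ↑((Finset.univ.filter (fun z => x ≤ z ∧ z ≤ w)).filter (fun z => Even (ρ z))) := by
    ext z; simp [and_assoc]
  have e2 : {z : α | x ≤ z ∧ z ≤ w ∧ ¬ Even (ρ z)}
      = ↑((Finset.univ.filter (fun z => x ≤ z ∧ z ≤ w)).filter (fun z => ¬ Even (ρ z))) := by
    ext z; simp [and_assoc]
  rw [e1, Set.ncard_coe_finset, e2, Set.ncard_coe_finset] at key
  rw [← Finset.sum_filter_add_sum_filter_not
    (Finset.univ.filter (fun z => x ≤ z ∧ z ≤ w)) (fun z => Even (ρ z))]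
  have A : ∑ z ∈ (Finset.univ.filter (fun z => x ≤ z ∧ z ≤ w)).filter (fun z => Even (ρ z)),
      ((-1 : ℤ) ^ ρ z)
      = ((Finset.univ.filter (fun z => x ≤ z ∧ z ≤ w)).filter (fun z => Even (ρ z))).card := by
    rw [Finset.sum_congr rfl (fun z hz => (Finset.mem_filter.mp hz).2.neg_one_pow)]
    simp
  have B : ∑ z ∈ (Finset.univ.filter (fun z => x ≤ z ∧ z ≤ w)).filter (fun z => ¬ Even (ρ z)),
      ((-1 : ℤ) ^ ρ z)
      = -((Finset.univ.filter (fun z => x ≤ z ∧ z ≤ w)).filter (fun z => ¬ Even (ρ z))).card := by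
    rw [Finset.sum_congr rfl
      (fun z hz => (Nat.not_even_iff_odd.mp (Finset.mem_filter.mp hz).2).neg_one_pow)]
    simp
  rw [A, B, key]
  ring

lemma euler_interior (ρ : α → ℕ) (hs : ∀ x y : α, x < y → ρ x < ρ y)
    (hE : ∀ x y : α, x < y →
      {z : α | x ≤ z ∧ z ≤ y ∧ Even (ρ z)}.ncard =
      {z : α | x ≤ z ∧ z ≤ y ∧ ¬ Even (ρ z)}.ncard)
    (x w : α) (hxw : x < w) :
    ∑ z ∈ Finset.univ.filter (fun z => x < z ∧ z < w), ((-1 : ℤ) ^ (ρ z - ρ x))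
      = -1 + (-1 : ℤ) ^ (ρ w - ρ x - 1) := by
  classical
  have h0 := euler_sum ρ hE x w hxw
  have hsplit : Finset.univ.filter (fun z => x ≤ z ∧ z ≤ w)
      = insert x (insert w (Finset.univ.filter (fun z => x < z ∧ z < w))) := by
    ext z
    simp only [Finset.mem_filter, Finset.mem_univ, true_and, Finset.mem_insert]
    constructor
    · rintro ⟨h1, h2⟩
      rcases eq_or_lt_of_le h1 with h1' | h1'
      · exact Or.inl h1'.symm
      rcases eq_or_lt_of_le h2 with h2' | h2'
      · exact Or.inr (Or.inl h2')
      · exact Or.inr (Or.inr ⟨h1', h2'⟩)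
    · rintro (rfl | rfl | ⟨h1, h2⟩)
      · exact ⟨le_rfl, hxw.le⟩
      · exact ⟨hxw.le, le_rfl⟩
      · exact ⟨h1.le, h2.le⟩
  have hx_notin : x ∉ insert w (Finset.univ.filter (fun z => x < z ∧ z < w)) := by
    simp [ne_of_lt hxw]
  have hw_notin : w ∉ Finset.univ.filter (fun z => x < z ∧ z < w) := by
    simp
  rw [hsplit, Finset.sum_insert hx_notin, Finset.sum_insert hw_notin] at h0
  have hsq : ((-1 : ℤ)) ^ ρ x * (-1) ^ ρ x = 1 := by
    rw [← pow_add]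
    exact Even.neg_one_pow ⟨ρ x, by omega⟩
  have hconv : ∀ z : α, x ≤ z → ((-1 : ℤ)) ^ (ρ z - ρ x) = (-1) ^ ρ z * (-1) ^ ρ x := by
    intro z hz
    have h1 : ρ x ≤ ρ z := rho_le_of_le ρ hs hz
    calc ((-1 : ℤ)) ^ (ρ z - ρ x) = (-1) ^ (ρ z - ρ x) * ((-1) ^ ρ x * (-1) ^ ρ x) := by
          rw [hsq, mul_one]
      _ = (-1) ^ (ρ z - ρ x + ρ x) * (-1) ^ ρ x := by rw [← pow_add]; ring
      _ = (-1) ^ ρ z * (-1) ^ ρ x := by rw [Nat.sub_add_cancel h1]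
  rw [Finset.sum_congr rfl (fun z hz => hconv z (by
    have := Finset.mem_filter.mp hz
    exact this.2.1.le))]
  rw [← Finset.sum_mul]
  have h2 : ∑ z ∈ Finset.univ.filter (fun z => x < z ∧ z < w), ((-1 : ℤ) ^ ρ z)
      = -((-1 : ℤ) ^ ρ x) - (-1) ^ ρ w := by linarith
  rw [h2]
  have hxw' : ρ x < ρ w := hs x w hxw
  have e1 : ((-1 : ℤ)) ^ ρ w * (-1) ^ ρ x = (-1) ^ (ρ w - ρ x) := (hconv w hxw.le).symm
  have e2 : ((-1 : ℤ)) ^ (ρ w - ρ x) = -(-1) ^ (ρ w - ρ x - 1) := by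
    obtain ⟨k, hk⟩ : ∃ k, ρ w - ρ x = k + 1 := ⟨ρ w - ρ x - 1, by omega⟩
    rw [hk, pow_succ, Nat.add_sub_cancel]
    ring
  calc (-((-1 : ℤ) ^ ρ x) - (-1) ^ ρ w) * (-1) ^ ρ x
      = -((-1 : ℤ) ^ ρ x * (-1) ^ ρ x) - ((-1) ^ ρ w * (-1) ^ ρ x) := by ring
    _ = -1 - (-1 : ℤ) ^ (ρ w - ρ x) := by rw [hsq, e1]
    _ = -1 + (-1 : ℤ) ^ (ρ w - ρ x - 1) := by rw [e2]; ring

lemma main (ρ : α → ℕ) (hs : ∀ x y : α, x < y → ρ x < ρ y)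
    (hE : ∀ x y : α, x < y →
      {z : α | x ≤ z ∧ z ≤ y ∧ Even (ρ z)}.ncard =
      {z : α | x ≤ z ∧ z ≤ y ∧ ¬ Even (ρ z)}.ncard) :
    ∀ n (x y : α), x < y → ρ y - ρ x = n →
      (hPoly ρ x y).natDegree ≤ n - 1 ∧
        reflect (n - 1) (hPoly ρ x y) = hPoly ρ x y := by
  intro n
  induction n using Nat.strong_induction_on with
  | _ n IH =>
  intro x y hxy hn
  have hρxy : ρ x < ρ y := hs x y hxy
  set S : Finset α := Finset.univ.filter (fun z => x < z ∧ z ≤ y) with hS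
  have hmem : ∀ z ∈ S, x < z ∧ z ≤ y := fun z hz => by simpa [hS] using hz
  have hrk : ∀ z ∈ S, ρ x < ρ z ∧ ρ z ≤ ρ y := fun z hz =>
    ⟨hs x z (hmem z hz).1, rho_le_of_le ρ hs (hmem z hz).2⟩
  have hH : hPoly ρ x y = ∑ z ∈ S, (X - 1) ^ (ρ z - ρ x - 1) * gPoly ρ z y :=
    hPoly_eq_sum ρ x y (ne_of_lt hxy)
  have hgdeg : ∀ z ∈ S, (gPoly ρ z y).natDegree ≤ ρ y - ρ z := fun z hz =>
    gPoly_natDegree_le ρ hs z y (hmem z hz).2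
  have hpowdeg : ∀ k : ℕ, (((X : ℤ[X]) - 1) ^ k).natDegree ≤ k := fun k =>
    le_trans natDegree_pow_le (by rw [natDegree_X_sub_one, mul_one])
  have hdeg : (hPoly ρ x y).natDegree ≤ n - 1 := by
    rw [hH]
    refine natDegree_sum_le_of_forall_le _ _ fun z hz => ?_
    obtain ⟨h1, h2⟩ := hrk z hz
    refine le_trans natDegree_mul_le ?_
    have h3 := hpowdeg (ρ z - ρ x - 1)
    have h4 := hgdeg z hz
    omega
  refine ⟨hdeg, ?_⟩
  have step1 : reflect (n - 1) (hPoly ρ x y)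
      = ∑ z ∈ S, (1 - X) ^ (ρ z - ρ x - 1) * reflect (ρ y - ρ z) (gPoly ρ z y) := by
    rw [hH, reflect_sum]
    refine Finset.sum_congr rfl fun z hz => ?_
    obtain ⟨h1, h2⟩ := hrk z hz
    have hsplit : n - 1 = (ρ z - ρ x - 1) + (ρ y - ρ z) := by omega
    rw [hsplit, reflect_mul _ _ (hpowdeg _) (hgdeg z hz), reflect_pow_X_sub_one]
  have step2 : ∀ z ∈ S, (1 - X) ^ (ρ z - ρ x - 1) * reflect (ρ y - ρ z) (gPoly ρ z y)
      = (1 - X) ^ (ρ z - ρ x - 1) * gPoly ρ z y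
        - (if z = y then 0 else (1 - X) ^ (ρ z - ρ x - 1 + 1) * hPoly ρ z y) := by
    intro z hz
    by_cases hzy : z = y
    · subst hzy
      simp [Nat.sub_self, gPoly_self, Polynomial.reflect_one]
    · have hzy' : z < y := lt_of_le_of_ne (hmem z hz).2 hzy
      have h1 := hrk z hz
      have hr : ρ y - ρ z < n := by omega
      obtain ⟨hd, hsym⟩ := IH (ρ y - ρ z) hr z y hzy' rfl
      rw [star ρ hs z y hzy' hd hsym, if_neg hzy]
      ring
  have e3 : ∑ z ∈ S, (if z = y then 0 else (1 - X) ^ (ρ z - ρ x - 1 + 1) * hPoly ρ z y)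
      = ∑ z ∈ S.erase y, (1 - X) ^ (ρ z - ρ x - 1 + 1) * hPoly ρ z y := by
    calc ∑ z ∈ S, (if z = y then 0 else (1 - X) ^ (ρ z - ρ x - 1 + 1) * hPoly ρ z y)
        = ∑ z ∈ S.erase y, (if z = y then 0 else (1 - X) ^ (ρ z - ρ x - 1 + 1) * hPoly ρ z y) :=
          (Finset.sum_erase S (by simp)).symm
      _ = ∑ z ∈ S.erase y, (1 - X) ^ (ρ z - ρ x - 1 + 1) * hPoly ρ z y :=
          Finset.sum_congr rfl fun z hz => if_neg (Finset.ne_of_mem_erase hz)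
  have hcond : ∀ (z w : α),
      z ∈ S.erase y ∧ w ∈ Finset.univ.filter (fun w => z < w ∧ w ≤ y)
        ↔ z ∈ Finset.univ.filter (fun u => x < u ∧ u < w) ∧ w ∈ S := by
    intro z w
    simp only [hS, Finset.mem_erase, Finset.mem_filter, Finset.mem_univ, true_and]
    constructor
    · rintro ⟨⟨hzy, hxz, _⟩, hzw, hwy⟩
      exact ⟨⟨hxz, hzw⟩, lt_trans hxz hzw, hwy⟩
    · rintro ⟨⟨hxz, hzw⟩, _, hwy⟩
      exact ⟨⟨ne_of_lt (lt_of_lt_of_le hzw hwy), hxz, (lt_of_lt_of_le hzw hwy).le⟩, hzw, hwy⟩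
  have e4 : ∑ z ∈ S.erase y, (1 - X) ^ (ρ z - ρ x - 1 + 1) * hPoly ρ z y
      = ∑ w ∈ S, C (∑ z ∈ Finset.univ.filter (fun z => x < z ∧ z < w),
            ((-1 : ℤ) ^ (ρ z - ρ x)))
          * ((X - 1) ^ (ρ w - ρ x - 1) * gPoly ρ w y) := by
    have expand : ∀ z ∈ S.erase y,
        (1 - X) ^ (ρ z - ρ x - 1 + 1) * hPoly ρ z y
          = ∑ w ∈ Finset.univ.filter (fun w => z < w ∧ w ≤ y),
              C ((-1 : ℤ) ^ (ρ z - ρ x)) * ((X - 1) ^ (ρ w - ρ x - 1) * gPoly ρ w y) := by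
      intro z hz
      have hz' := Finset.mem_erase.mp hz
      have hzS := hmem z hz'.2
      have hzy : z < y := lt_of_le_of_ne hzS.2 hz'.1
      rw [hPoly_eq_sum ρ z y (ne_of_lt hzy), Finset.mul_sum]
      refine Finset.sum_congr rfl fun w hw => ?_
      have hw' : z < w ∧ w ≤ y := by simpa using (Finset.mem_filter.mp hw).2
      have r1 : ρ x < ρ z := hs x z hzS.1
      have r2 : ρ z < ρ w := hs z w hw'.1
      have hCpow : ((1 : ℤ[X]) - X) ^ (ρ z - ρ x - 1 + 1)
          = C ((-1 : ℤ) ^ (ρ z - ρ x)) * (X - 1) ^ (ρ z - ρ x - 1 + 1) := by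
        have hneg : ((1 : ℤ[X]) - X) = -(X - 1) := by ring
        rw [hneg, neg_pow]
        have hexp' : ρ z - ρ x - 1 + 1 = ρ z - ρ x := by omega
        rw [hexp']
        congr 1
        simp [map_pow]
      have he : (ρ z - ρ x - 1 + 1) + (ρ w - ρ z - 1) = ρ w - ρ x - 1 := by omega
      calc (1 - X) ^ (ρ z - ρ x - 1 + 1) * ((X - 1) ^ (ρ w - ρ z - 1) * gPoly ρ w y)
          = C ((-1 : ℤ) ^ (ρ z - ρ x))
              * (((X - 1) ^ (ρ z - ρ x - 1 + 1) * (X - 1) ^ (ρ w - ρ z - 1)) * gPoly ρ w y) := by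
            rw [hCpow]; ring
        _ = C ((-1 : ℤ) ^ (ρ z - ρ x)) * ((X - 1) ^ (ρ w - ρ x - 1) * gPoly ρ w y) := by
            rw [← pow_add, he]
    rw [Finset.sum_congr rfl expand, Finset.sum_comm' hcond]
    refine Finset.sum_congr rfl fun w hw => ?_
    rw [← Finset.sum_mul, ← map_sum]
  have e5 : ∀ w ∈ S, (∑ z ∈ Finset.univ.filter (fun z => x < z ∧ z < w),
      ((-1 : ℤ) ^ (ρ z - ρ x))) = -1 + (-1 : ℤ) ^ (ρ w - ρ x - 1) := fun w hw =>
    euler_interior ρ hs hE x w (hmem w hw).1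
  have e6 : ∀ z : α, ((1 - X : ℤ[X])) ^ (ρ z - ρ x - 1) * gPoly ρ z y
      = C ((-1 : ℤ) ^ (ρ z - ρ x - 1)) * ((X - 1) ^ (ρ z - ρ x - 1) * gPoly ρ z y) := by
    intro z
    have hneg : ((1 : ℤ[X]) - X) = -(X - 1) := by ring
    rw [hneg, neg_pow]
    have hC : ((-1 : ℤ[X])) ^ (ρ z - ρ x - 1) = C ((-1 : ℤ) ^ (ρ z - ρ x - 1)) := by
      simp [map_pow]
    rw [hC, mul_assoc]
  calc reflect (n - 1) (hPoly ρ x y)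
      = ∑ z ∈ S, (1 - X) ^ (ρ z - ρ x - 1) * reflect (ρ y - ρ z) (gPoly ρ z y) := step1
    _ = ∑ z ∈ S, ((1 - X) ^ (ρ z - ρ x - 1) * gPoly ρ z y
          - (if z = y then 0 else (1 - X) ^ (ρ z - ρ x - 1 + 1) * hPoly ρ z y)) :=
        Finset.sum_congr rfl step2
    _ = ∑ z ∈ S, (1 - X) ^ (ρ z - ρ x - 1) * gPoly ρ z y
        - ∑ z ∈ S, (if z = y then 0 else (1 - X) ^ (ρ z - ρ x - 1 + 1) * hPoly ρ z y) :=
        Finset.sum_sub_distrib _ _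
    _ = ∑ w ∈ S, C ((-1 : ℤ) ^ (ρ w - ρ x - 1)) * ((X - 1) ^ (ρ w - ρ x - 1) * gPoly ρ w y)
        - ∑ w ∈ S, C (-1 + (-1 : ℤ) ^ (ρ w - ρ x - 1))
            * ((X - 1) ^ (ρ w - ρ x - 1) * gPoly ρ w y) := by
        rw [e3, e4]
        congr 1
        · exact Finset.sum_congr rfl fun z _ => e6 z
        · exact Finset.sum_congr rfl fun w hw => by rw [e5 w hw]
    _ = ∑ w ∈ S, (C ((-1 : ℤ) ^ (ρ w - ρ x - 1)) - C (-1 + (-1 : ℤ) ^ (ρ w - ρ x - 1)))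
          * ((X - 1) ^ (ρ w - ρ x - 1) * gPoly ρ w y) := by
        rw [← Finset.sum_sub_distrib]
        exact Finset.sum_congr rfl fun w hw => by ring
    _ = ∑ w ∈ S, (X - 1) ^ (ρ w - ρ x - 1) * gPoly ρ w y := by
        refine Finset.sum_congr rfl fun w hw => ?_
        have h1 : (C ((-1 : ℤ) ^ (ρ w - ρ x - 1)) - C (-1 + (-1 : ℤ) ^ (ρ w - ρ x - 1)))
            = 1 := by
          rw [← map_sub,
            show ((-1 : ℤ) ^ (ρ w - ρ x - 1) - (-1 + (-1 : ℤ) ^ (ρ w - ρ x - 1))) = 1 by ring,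
            map_one]
        rw [h1, one_mul]
    _ = hPoly ρ x y := hH.symm

end StanleyAux

/-- **Paragraph 2.4 (1).** Let `𝒫` be an Eulerian poset of rank `d > 0`
(encoded by a rank function `ρ` with `ρ ⊥ = 0`, `ρ ⊤ = d`, raising ranks by one
along covering relations, and such that every nontrivial interval has as many
elements of even as of odd rank).  Then `h(𝒫,t) = t^{d-1}·h(𝒫,t⁻¹)`: writing
`h(𝒫,t) = Σ_{i=0}^{d-1} h_i t^i`, one has `h_i = h_{d-1-i}` for all `i`. -/
theorem hPoly_symm {α : Type*} [PartialOrder α] [Fintype α] [BoundedOrder α]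
    (ρ : α → ℕ) (d : ℕ) (hd : 0 < d)
    (hbot : ρ ⊥ = 0) (htop : ρ ⊤ = d)
    (hcov : ∀ x y : α, x ⋖ y → ρ y = ρ x + 1)
    (hEuler : ∀ x y : α, x < y →
      {z : α | x ≤ z ∧ z ≤ y ∧ Even (ρ z)}.ncard =
      {z : α | x ≤ z ∧ z ≤ y ∧ ¬ Even (ρ z)}.ncard) :
    (hPoly ρ (⊥ : α) ⊤).natDegree ≤ d - 1 ∧
      ∀ i ≤ d - 1,
        (hPoly ρ (⊥ : α) ⊤).coeff i = (hPoly ρ (⊥ : α) ⊤).coeff (d - 1 - i) := by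
  have hs : ∀ x y : α, x < y → ρ x < ρ y := fun x y h => StanleyAux.rho_lt_of_lt ρ hcov y x h
  have hbt : (⊥ : α) < ⊤ := by
    refine lt_of_le_of_ne bot_le fun h => ?_
    rw [h, htop] at hbot
    omega
  have hn : ρ (⊤ : α) - ρ (⊥ : α) = d := by rw [hbot, htop]; omega
  obtain ⟨h1, h2⟩ := StanleyAux.main ρ hs hEuler d ⊥ ⊤ hbt hn
  refine ⟨h1, fun i hi => ?_⟩
  conv_lhs => rw [← h2]
  rw [Polynomial.coeff_reflect, Polynomial.revAt_le (by omega : i ≤ d - 1)]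
end

section
/- Let 𝒫 be an Eulerian poset of rank d > 0 with minimal element 0̂ and maximal element 1̂. Then Σ_{0̂ ≤ x ≤ 1̂} (−1)^{ρ(1̂)−ρ(x)} g([0̂,x],t)·g([x,1̂]*,t) = 0, and likewise Σ_{0̂ ≤ x ≤ 1̂} (−1)^{ρ(x)−ρ(0̂)} g([0̂,x]*,t)·g([x,1̂],t) = 0. -/
set_option linter.unusedSectionVars false
set_option maxHeartbeats 1000000

namespace StanleyConv
open Polynomial Finset
open scoped Classical

/- ### truncHalf and coefficient bounds -/

lemma coeff_truncHalf (d : ℕ) (p : Polynomial ℤ) (i : ℕ) :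
    (truncHalf d p).coeff i = if 2 * i < d then p.coeff i else 0 := by
  have hmem : i ∈ Finset.range ((d + 1) / 2) ↔ 2 * i < d := by
    simp only [Finset.mem_range]; omega
  simp only [truncHalf, finset_sum_coeff, coeff_C_mul, coeff_X_pow, mul_ite, mul_one, mul_zero]
  rw [Finset.sum_ite_eq (Finset.range ((d + 1) / 2)) i (fun j => p.coeff j)]
  by_cases h : 2 * i < d
  · rw [if_pos (hmem.2 h), if_pos h]
  · rw [if_neg (fun hh => h (hmem.1 hh)), if_neg h]

/-- `Bnd p a` : every nonzero coefficient index `i` of `p` satisfies `2*i < a`. -/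
def Bnd (p : Polynomial ℤ) (a : ℕ) : Prop := ∀ i, a ≤ 2 * i → p.coeff i = 0

lemma bnd_truncHalf (d : ℕ) (p : Polynomial ℤ) : Bnd (truncHalf d p) d := by
  intro i hi
  rw [coeff_truncHalf, if_neg (by omega)]

lemma bnd_one : Bnd 1 1 := by
  intro i hi
  rw [Polynomial.coeff_one, if_neg (by omega)]

lemma Bnd.mono {p : Polynomial ℤ} {a b : ℕ} (h : Bnd p a) (hab : a ≤ b) : Bnd p b :=
  fun i hi => h i (le_trans hab hi)

lemma Bnd.natDegree_le {p : Polynomial ℤ} {a : ℕ} (h : Bnd p a) : p.natDegree ≤ a := by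
  rw [Polynomial.natDegree_le_iff_coeff_eq_zero]
  exact fun m hm => h m (by omega)

lemma Bnd.C_mul {p : Polynomial ℤ} {a : ℕ} (c : ℤ) (h : Bnd p a) : Bnd (C c * p) a := by
  intro i hi
  rw [coeff_C_mul, h i hi, mul_zero]

lemma Bnd.mul {p q : Polynomial ℤ} {a b : ℕ} (hp : Bnd p a) (hq : Bnd q b)
    (ha : 1 ≤ a) (hb : 1 ≤ b) : Bnd (p * q) (a + b - 1) := by
  intro i hi
  rw [Polynomial.coeff_mul]
  apply Finset.sum_eq_zero
  intro x hx
  have hxy : x.1 + x.2 = i := Finset.HasAntidiagonal.mem_antidiagonal.mp hx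
  by_cases h1 : a ≤ 2 * x.1
  · rw [hp x.1 h1, zero_mul]
  · rw [hq x.2 (by omega), mul_zero]

lemma bnd_add {p q : Polynomial ℤ} {a : ℕ} (hp : Bnd p a) (hq : Bnd q a) : Bnd (p + q) a := by
  intro i hi; rw [coeff_add, hp i hi, hq i hi, add_zero]

lemma bnd_sum {γ : Type*} {s : Finset γ} {f : γ → Polynomial ℤ} {a : ℕ}
    (h : ∀ z ∈ s, Bnd (f z) a) : Bnd (∑ z ∈ s, f z) a := by
  intro i hi
  rw [finset_sum_coeff]
  exact Finset.sum_eq_zero fun z hz => h z hz i hi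

/- ### reflect facts -/

lemma reflect_sum {γ : Type*} (N : ℕ) (s : Finset γ) (f : γ → Polynomial ℤ) :
    reflect N (∑ z ∈ s, f z) = ∑ z ∈ s, reflect N (f z) := by
  classical
  induction s using Finset.induction with
  | empty => simp [reflect_zero]
  | insert _ _ h ih => simp [Finset.sum_insert h, reflect_add, ih]

lemma reflect_C_mul (N : ℕ) (c : ℤ) (p : Polynomial ℤ) :
    reflect N (C c * p) = C c * reflect N p := by
  ext i
  simp [coeff_reflect, coeff_C_mul]

lemma reflect_one_sub_X : reflect 1 (1 - X : Polynomial ℤ) = X - 1 := by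
  ext i
  simp only [coeff_reflect, coeff_sub, coeff_one, coeff_X]
  rcases i with _ | _ | i <;> simp [Polynomial.revAt_le, Polynomial.revAt_eq_self_of_lt]

lemma reflect_X_sub_one_pow (m : ℕ) :
    reflect m ((X - 1 : Polynomial ℤ) ^ m) = (1 - X) ^ m := by
  induction m with
  | zero => simp
  | succ k ih =>
    have h1 : (X - 1 : Polynomial ℤ).natDegree ≤ 1 := by
      simpa using (natDegree_X_sub_C (1 : ℤ)).le
    have hk : ((X - 1 : Polynomial ℤ) ^ k).natDegree ≤ k :=
      le_trans (natDegree_pow_le) (by nlinarith [natDegree_X_sub_C (1 : ℤ)])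
    have : reflect (1 + k) ((X - 1 : Polynomial ℤ) * (X - 1) ^ k)
        = reflect 1 (X - 1) * reflect k ((X - 1) ^ k) := reflect_mul _ _ h1 hk
    have h2 : reflect 1 (X - 1 : Polynomial ℤ) = 1 - X := by
      ext i
      simp only [coeff_reflect, coeff_sub, coeff_one, coeff_X]
      rcases i with _ | _ | i <;> simp [Polynomial.revAt_le, Polynomial.revAt_eq_self_of_lt]
    calc reflect (k + 1) ((X - 1 : Polynomial ℤ) ^ (k + 1))
        = reflect (1 + k) ((X - 1 : Polynomial ℤ) * (X - 1) ^ k) := by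
          rw [pow_succ, mul_comm ((X - 1 : Polynomial ℤ) ^ k), add_comm]
      _ = (1 - X) * (1 - X) ^ k := by rw [this, h2, ih]
      _ = (1 - X) ^ (k + 1) := by rw [pow_succ, mul_comm]

lemma one_sub_X_pow (k : ℕ) : ((1 - X : Polynomial ℤ)) ^ k = C ((-1) ^ k) * (X - 1) ^ k := by
  have : (1 - X : Polynomial ℤ) = C (-1) * (X - 1) := by rw [map_neg, C_1]; ring
  rw [this, mul_pow, ← C_pow]

lemma neg_one_pow_sub {a b : ℕ} (h : b ≤ a) : ((-1 : ℤ)) ^ (a - b) = (-1) ^ a * (-1) ^ b := by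
  have : ((-1 : ℤ)) ^ (a - b) * (-1) ^ b = (-1) ^ a := by
    rw [← pow_add, Nat.sub_add_cancel h]
  have hb : ((-1 : ℤ)) ^ b * (-1) ^ b = 1 := by
    rw [← pow_add]; exact Even.neg_one_pow ⟨b, rfl⟩
  calc ((-1 : ℤ)) ^ (a - b) = (-1) ^ (a - b) * ((-1) ^ b * (-1) ^ b) := by rw [hb, mul_one]
    _ = ((-1) ^ (a - b) * (-1) ^ b) * (-1) ^ b := by ring
    _ = (-1) ^ a * (-1) ^ b := by rw [this]

end StanleyConv

section
variable {β : Type*} [PartialOrder β] [Fintype β]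
open Polynomial Finset
open scoped Classical

namespace StanleyConv

noncomputable def Jcc (x y : β) : Finset β := Finset.univ.filter fun z => x ≤ z ∧ z ≤ y
noncomputable def Joc (x y : β) : Finset β := Finset.univ.filter fun z => x < z ∧ z ≤ y

@[simp] lemma mem_Jcc {x y z : β} : z ∈ Jcc x y ↔ x ≤ z ∧ z ≤ y := by simp [Jcc]
@[simp] lemma mem_Joc {x y z : β} : z ∈ Joc x y ↔ x < z ∧ z ≤ y := by simp [Joc]

lemma Jcc_self (x : β) : Jcc x x = {x} := by
  ext z; simp [le_antisymm_iff, and_comm]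

lemma Jcc_eq_insert {x y : β} (h : x ≤ y) : Jcc x y = insert x (Joc x y) := by
  ext z
  simp only [mem_Jcc, mem_Joc, Finset.mem_insert]
  constructor
  · rintro ⟨h1, h2⟩
    rcases eq_or_lt_of_le h1 with h1 | h1
    · exact Or.inl h1.symm
    · exact Or.inr ⟨h1, h2⟩
  · rintro (rfl | ⟨h1, h2⟩)
    · exact ⟨le_rfl, h⟩
    · exact ⟨h1.le, h2⟩

lemma not_mem_Joc {x y : β} : x ∉ Joc x y := by simp

lemma finsum_setOf (x y : β) (f : β → Polynomial ℤ) :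
    ∑ᶠ z ∈ {z : β | x < z ∧ z ≤ y}, f z = ∑ z ∈ Joc x y, f z := by
  rw [← finsum_mem_coe_finset]
  congr 1
  ext z; simp

section RankedCore
variable (σ : β → ℕ)

lemma rank_le_of_le (hmono : ∀ ⦃x y : β⦄, x < y → σ x < σ y) {x y : β} (h : x ≤ y) :
    σ x ≤ σ y := by
  rcases eq_or_lt_of_le h with rfl | h
  · exact le_rfl
  · exact (hmono h).le

lemma gPoly_self (x : β) : gPoly σ x x = 1 := by
  simp [gPoly, Nat.sub_self, gAux]

lemma gAux_stable (hmono : ∀ ⦃x y : β⦄, x < y → σ x < σ y) :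
    ∀ m : ℕ, ∀ x y : β, x ≤ y → σ y - σ x ≤ m → gAux σ m x y = gPoly σ x y := by
  intro m
  induction m using Nat.strong_induction_on with
  | _ m ih =>
  intro x y hxy hm
  rcases eq_or_lt_of_le hxy with rfl | h
  · cases m <;> simp [gPoly, Nat.sub_self, gAux]
  · have hσ := hmono h
    obtain ⟨k, rfl⟩ : ∃ k, m = k + 1 := ⟨m - 1, by omega⟩
    obtain ⟨j, hj⟩ : ∃ j, σ y - σ x = j + 1 := ⟨σ y - σ x - 1, by omega⟩
    have key : ∀ fuel : ℕ, fuel < k + 1 → σ y - σ x ≤ fuel + 1 →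
        gAux σ (fuel + 1) x y = truncHalf (σ y - σ x)
          ((1 - X) * ∑ z ∈ Joc x y, (X - 1) ^ (σ z - σ x - 1) * gPoly σ z y) := by
      intro fuel hflt hfuel
      show (if x = y then 1 else _) = _
      rw [if_neg h.ne, finsum_setOf]
      congr 2
      apply Finset.sum_congr rfl
      intro z hz
      rw [mem_Joc] at hz
      congr 1
      apply ih fuel (by omega) z y hz.2
      have h1 := hmono hz.1
      have h2 := rank_le_of_le σ hmono hz.2
      omega
    calc gAux σ (k + 1) x y
        = truncHalf (σ y - σ x)
          ((1 - X) * ∑ z ∈ Joc x y, (X - 1) ^ (σ z - σ x - 1) * gPoly σ z y) :=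
          key k (by omega) hm
      _ = gAux σ (j + 1) x y := (key j (by omega) (by omega)).symm
      _ = gPoly σ x y := by rw [gPoly, hj]

lemma gPoly_eq (hmono : ∀ ⦃x y : β⦄, x < y → σ x < σ y) {x y : β} (h : x < y) :
    gPoly σ x y = truncHalf (σ y - σ x)
      ((1 - X) * ∑ z ∈ Joc x y, (X - 1) ^ (σ z - σ x - 1) * gPoly σ z y) := by
  have hn : 1 ≤ σ y - σ x := by have := hmono h; omega
  obtain ⟨j, hj⟩ : ∃ j, σ y - σ x = j + 1 := ⟨σ y - σ x - 1, by omega⟩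
  rw [gPoly, hj]
  show (if x = y then 1 else _) = _
  rw [if_neg h.ne, finsum_setOf]
  rw [← hj]
  congr 2
  apply Finset.sum_congr rfl
  intro z hz
  rw [mem_Joc] at hz
  congr 1
  apply gAux_stable σ hmono
  · exact hz.2
  · have h1 := hmono hz.1
    have h2 := rank_le_of_le σ hmono hz.2
    omega

lemma bnd_gPoly (hmono : ∀ ⦃x y : β⦄, x < y → σ x < σ y) {x y : β} (h : x < y) :
    Bnd (gPoly σ x y) (σ y - σ x) := by
  rw [gPoly_eq σ hmono h]
  exact bnd_truncHalf _ _

lemma natDegree_gPoly_le (hmono : ∀ ⦃x y : β⦄, x < y → σ x < σ y) {x y : β} (h : x ≤ y) :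
    (gPoly σ x y).natDegree ≤ σ y - σ x := by
  rcases eq_or_lt_of_le h with rfl | h
  · simp [gPoly_self]
  · exact (bnd_gPoly σ hmono h).natDegree_le

/-- shift invariance: `gAux` depends only on rank differences inside the interval. -/
lemma gAux_congr : ∀ m : ℕ, ∀ (σ₁ σ₂ : β → ℕ) (x y : β),
    (∀ z w : β, x ≤ z → z ≤ w → w ≤ y → σ₁ w - σ₁ z = σ₂ w - σ₂ z) →
    gAux σ₁ m x y = gAux σ₂ m x y := by
  intro m
  induction m with
  | zero => intro _ _ _ _ _; rfl
  | succ k ih =>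
    intro σ₁ σ₂ x y hd
    show (if x = y then 1 else _) = (if x = y then 1 else _)
    by_cases hxy : x = y
    · rw [if_pos hxy, if_pos hxy]
    · rw [if_neg hxy, if_neg hxy]
      by_cases hle : x ≤ y
      · rw [hd x y le_rfl hle le_rfl]
        congr 2
        rw [finsum_setOf, finsum_setOf]
        apply Finset.sum_congr rfl
        intro z hz
        rw [mem_Joc] at hz
        rw [hd x z le_rfl hz.1.le hz.2,
          ih σ₁ σ₂ z y (fun u v hu huv hv => hd u v (hz.1.le.trans hu) huv hv)]
      · have hempty : {z : β | x < z ∧ z ≤ y} = ∅ := by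
          ext z
          simp only [Set.mem_setOf_eq, Set.mem_empty_iff_false, iff_false, not_and]
          intro h1 h2
          exact hle (h1.le.trans h2)
        rw [hempty]
        simp [truncHalf]

lemma gPoly_congr (σ₁ σ₂ : β → ℕ) (x y : β)
    (hd : ∀ z w : β, x ≤ z → z ≤ w → w ≤ y → σ₁ w - σ₁ z = σ₂ w - σ₂ z)
    (hxy : x ≤ y) :
    gPoly σ₁ x y = gPoly σ₂ x y := by
  rw [gPoly, gPoly, hd x y le_rfl hxy le_rfl, gAux_congr _ σ₁ σ₂ x y hd]

end RankedCore
end StanleyConv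
end

namespace StanleyConv
section
variable {β : Type*} [PartialOrder β] [Fintype β]
open Polynomial Finset
open scoped Classical

variable (σ : β → ℕ)

lemma natDegree_X_sub_one_pow_le (k : ℕ) : ((X - 1 : Polynomial ℤ) ^ k).natDegree ≤ k := by
  refine le_trans natDegree_pow_le ?_
  have : (X - 1 : Polynomial ℤ).natDegree = 1 := by
    simpa using natDegree_X_sub_C (1 : ℤ)
  rw [this, mul_one]

lemma natDegree_one_sub_X_le : (1 - X : Polynomial ℤ).natDegree ≤ 1 := by
  have h : (1 - X : Polynomial ℤ) = -(X - C 1) := by rw [map_one]; ring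
  rw [h, natDegree_neg]
  exact (natDegree_X_sub_C 1).le

lemma euler_Jcc (hE : ∀ ⦃x y : β⦄, x < y → ∑ z ∈ Jcc x y, (-1 : ℤ) ^ (σ z) = 0)
    {v w : β} (h : v ≤ w) :
    ∑ z ∈ Jcc v w, (-1 : ℤ) ^ (σ z) = if v = w then (-1) ^ (σ v) else 0 := by
  rcases eq_or_lt_of_le h with rfl | h
  · rw [Jcc_self]; simp
  · rw [if_neg h.ne]; exact hE h

lemma euler_Joc (hmono : ∀ ⦃x y : β⦄, x < y → σ x < σ y)
    (hE : ∀ ⦃x y : β⦄, x < y → ∑ z ∈ Jcc x y, (-1 : ℤ) ^ (σ z) = 0)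
    {x w : β} (h : x < w) :
    ∑ z ∈ Joc x w, (-1 : ℤ) ^ (σ z - σ x - 1) = 1 := by
  have h1 : ∑ z ∈ Joc x w, ((-1 : ℤ)) ^ (σ z) = -(-1) ^ (σ x) := by
    have h2 := hE h
    rw [Jcc_eq_insert h.le, Finset.sum_insert not_mem_Joc] at h2
    linarith
  calc ∑ z ∈ Joc x w, (-1 : ℤ) ^ (σ z - σ x - 1)
      = ∑ z ∈ Joc x w, (-1 : ℤ) ^ (σ z) * (-1) ^ (σ x + 1) := by
        apply Finset.sum_congr rfl
        intro z hz; rw [mem_Joc] at hz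
        have hle : σ x + 1 ≤ σ z := hmono hz.1
        rw [show σ z - σ x - 1 = σ z - (σ x + 1) by omega, neg_one_pow_sub hle]
    _ = (-(-1) ^ (σ x)) * (-1) ^ (σ x + 1) := by rw [← Finset.sum_mul, h1]
    _ = (-1 : ℤ) ^ (σ x + σ x) := by rw [pow_succ]; ring
    _ = 1 := Even.neg_one_pow ⟨σ x, rfl⟩

/-- The key "hat" identity: `reflect n g([x,y]) = Σ_{x ≤ z ≤ y} (t-1)^{ρz-ρx} g([z,y])`.
This encodes the Dehn–Sommerville symmetry of the `h`-polynomial. -/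
lemma reflect_gPoly (hmono : ∀ ⦃x y : β⦄, x < y → σ x < σ y)
    (hE : ∀ ⦃x y : β⦄, x < y → ∑ z ∈ Jcc x y, (-1 : ℤ) ^ (σ z) = 0) :
    ∀ n : ℕ, ∀ x y : β, x ≤ y → σ y - σ x = n →
    reflect n (gPoly σ x y) = ∑ z ∈ Jcc x y, (X - 1) ^ (σ z - σ x) * gPoly σ z y := by
  intro n
  induction n using Nat.strong_induction_on with
  | _ n ih =>
  intro x y hxy hn
  rcases eq_or_lt_of_le hxy with rfl | hlt
  · obtain rfl : n = 0 := by omega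
    rw [gPoly_self, Jcc_self, Finset.sum_singleton, Nat.sub_self, pow_zero, one_mul,
      gPoly_self]
    simpa using reflect_C (1 : ℤ) 0
  · have hn1 : 1 ≤ n := by have := hmono hlt; omega
    set h : Polynomial ℤ := ∑ z ∈ Joc x y, (X - 1) ^ (σ z - σ x - 1) * gPoly σ z y with hh
    have hgdef : gPoly σ x y = truncHalf n ((1 - X) * h) := by
      rw [gPoly_eq σ hmono hlt, hn]
    -- degree bound for h
    have hdeg : h.natDegree ≤ n - 1 := by
      rw [hh]
      apply Polynomial.natDegree_sum_le_of_forall_le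
      intro z hz; rw [mem_Joc] at hz
      have hz1 := hmono hz.1
      have hz2 := rank_le_of_le σ hmono hz.2
      refine le_trans natDegree_mul_le ?_
      have d1 := natDegree_X_sub_one_pow_le (σ z - σ x - 1)
      have d2 := natDegree_gPoly_le σ hmono hz.2
      omega
    -- symmetry of h
    have hsym : reflect (n - 1) h = h := by
      have term_eq : ∀ z ∈ Joc x y,
          reflect (n - 1) ((X - 1) ^ (σ z - σ x - 1) * gPoly σ z y)
          = ∑ w ∈ Jcc z y, C ((-1 : ℤ) ^ (σ z - σ x - 1)) *
              ((X - 1) ^ (σ w - σ x - 1) * gPoly σ w y) := by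
        intro z hz; rw [mem_Joc] at hz
        have hz1 := hmono hz.1
        have hz2 := rank_le_of_le σ hmono hz.2
        have e1 : n - 1 = (σ z - σ x - 1) + (σ y - σ z) := by omega
        rw [e1, reflect_mul _ _ (natDegree_X_sub_one_pow_le _)
            (natDegree_gPoly_le σ hmono hz.2),
          reflect_X_sub_one_pow, one_sub_X_pow,
          ih (σ y - σ z) (by omega) z y hz.2 rfl, mul_assoc, Finset.mul_sum,
          Finset.mul_sum]
        apply Finset.sum_congr rfl
        intro w hw; rw [mem_Jcc] at hw
        have hw1 := rank_le_of_le σ hmono hw.1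
        have hw2 := rank_le_of_le σ hmono hw.2
        rw [show (σ w - σ x - 1) = (σ z - σ x - 1) + (σ w - σ z) by omega, pow_add]
        ring
      calc reflect (n - 1) h
          = ∑ z ∈ Joc x y, ∑ w ∈ Jcc z y, C ((-1 : ℤ) ^ (σ z - σ x - 1)) *
              ((X - 1) ^ (σ w - σ x - 1) * gPoly σ w y) := by
            rw [hh, reflect_sum]; exact Finset.sum_congr rfl term_eq
        _ = ∑ w ∈ Joc x y, ∑ z ∈ Joc x w, C ((-1 : ℤ) ^ (σ z - σ x - 1)) *
              ((X - 1) ^ (σ w - σ x - 1) * gPoly σ w y) := by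
            apply Finset.sum_comm'
            intro z w
            simp only [mem_Joc, mem_Jcc]
            constructor
            · rintro ⟨⟨h1, h2⟩, h3, h4⟩
              exact ⟨⟨h1, h3⟩, ⟨h1.trans_le h3, h4⟩⟩
            · rintro ⟨⟨h1, h2⟩, h3, h4⟩
              exact ⟨⟨h1, h2.trans h4⟩, h2, h4⟩
        _ = h := by
            rw [hh]
            apply Finset.sum_congr rfl
            intro w hw; rw [mem_Joc] at hw
            have he : ∑ z ∈ Joc x w, ((-1 : ℤ)) ^ (σ z - σ x - 1) = 1 :=
              euler_Joc σ hmono hE hw.1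
            rw [← Finset.sum_mul, ← map_sum, he, map_one, one_mul]
    -- antisymmetry of (1-X)*h
    have hp : reflect n ((1 - X) * h) = -((1 - X) * h) := by
      have e : n = 1 + (n - 1) := by omega
      rw [e, reflect_mul _ _ natDegree_one_sub_X_le hdeg, reflect_one_sub_X, hsym]
      ring
    have hpd : ((1 - X) * h).natDegree ≤ n := by
      refine le_trans natDegree_mul_le ?_
      have := natDegree_one_sub_X_le
      omega
    have hpc : ∀ i, n < i → ((1 - X) * h).coeff i = 0 := fun i hi =>
      Polynomial.coeff_eq_zero_of_natDegree_lt (lt_of_le_of_lt hpd hi)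
    have hanti : ∀ i ≤ n, ((1 - X) * h).coeff (n - i) = -((1 - X) * h).coeff i := by
      intro i hi
      have h2 := congrArg (fun q => Polynomial.coeff q i) hp
      simpa [coeff_reflect, Polynomial.revAt_le hi, coeff_neg] using h2
    -- reflect of g
    have hrg : reflect n (gPoly σ x y) = gPoly σ x y - (1 - X) * h := by
      ext i
      rw [coeff_reflect]
      by_cases hin : i ≤ n
      · rw [Polynomial.revAt_le hin, hgdef]
        simp only [coeff_truncHalf, coeff_sub]
        by_cases h1 : 2 * i < n
        · rw [if_neg (by omega), if_pos h1, sub_self]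
        · by_cases h2 : 2 * i = n
          · have hpi : ((1 - X) * h).coeff i = 0 := by
              have h3 := hanti i (by omega)
              rw [show n - i = i by omega] at h3
              omega
            rw [if_neg (by omega), if_neg h1, hpi]; ring
          · rw [if_pos (by omega), if_neg h1, hanti i hin]; ring
      · have hgt : n < i := by omega
        have hrv : Polynomial.revAt n i = i := by
          exact Polynomial.revAt_eq_self_of_lt hgt
        rw [hrv, hgdef]
        simp only [coeff_truncHalf, coeff_sub]
        rw [if_neg (by omega), hpc i hgt]; ring
    -- assemble
    have hsum' : ∑ z ∈ Joc x y, (X - 1) ^ (σ z - σ x) * gPoly σ z y = (X - 1) * h := by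
      rw [hh, Finset.mul_sum]
      apply Finset.sum_congr rfl
      intro z hz; rw [mem_Joc] at hz
      have hz1 := hmono hz.1
      obtain ⟨m, hm⟩ : ∃ m, σ z - σ x = m + 1 := ⟨σ z - σ x - 1, by omega⟩
      rw [hm, Nat.add_sub_cancel, pow_succ]
      ring
    rw [Jcc_eq_insert hlt.le, Finset.sum_insert not_mem_Joc, Nat.sub_self, pow_zero,
      one_mul, hsum', hrg]
    ring

end
end StanleyConv

namespace StanleyConv
section
variable {β : Type*} [PartialOrder β] [Fintype β]
open Polynomial Finset OrderDual
open scoped Classical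

/-- rank function of the dual poset (w.r.t. an upper bound `N` of `σ`). -/
def dualRank (σ : β → ℕ) (N : ℕ) : βᵒᵈ → ℕ := fun z => N - σ (OrderDual.ofDual z)

/-- `g`-polynomial of the dual interval, with dual rank normalized by `N`. -/
noncomputable def gD (σ : β → ℕ) (N : ℕ) (x y : β) : Polynomial ℤ :=
  gPoly (dualRank σ N) (OrderDual.toDual y) (OrderDual.toDual x)

variable (σ : β → ℕ) (N : ℕ)

lemma gD_self (x : β) : gD σ N x x = 1 := gPoly_self _ _

lemma sum_Jcc_dual {M : Type*} [AddCommMonoid M] (a b : βᵒᵈ) (f : βᵒᵈ → M) :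
    ∑ z ∈ Jcc a b, f z
      = ∑ w ∈ Jcc (OrderDual.ofDual b) (OrderDual.ofDual a), f (OrderDual.toDual w) := by
  apply Finset.sum_equiv OrderDual.ofDual
  · intro z
    simp only [mem_Jcc]
    constructor
    · rintro ⟨h1, h2⟩; exact ⟨h2, h1⟩
    · rintro ⟨h1, h2⟩; exact ⟨h2, h1⟩
  · intro z hz; rfl

lemma dmono (hmono : ∀ ⦃x y : β⦄, x < y → σ x < σ y) (hN : ∀ z, σ z ≤ N) :
    ∀ ⦃a b : βᵒᵈ⦄, a < b → dualRank σ N a < dualRank σ N b := by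
  intro a b hab
  have h1 : (OrderDual.ofDual b) < (OrderDual.ofDual a) := hab
  have h2 := hmono h1
  have h3 := hN (OrderDual.ofDual a)
  have h4 := hN (OrderDual.ofDual b)
  show N - σ (OrderDual.ofDual a) < N - σ (OrderDual.ofDual b)
  omega

lemma dE (hE : ∀ ⦃x y : β⦄, x < y → ∑ z ∈ Jcc x y, (-1 : ℤ) ^ (σ z) = 0)
    (hN : ∀ z, σ z ≤ N) :
    ∀ ⦃a b : βᵒᵈ⦄, a < b → ∑ z ∈ Jcc a b, (-1 : ℤ) ^ (dualRank σ N z) = 0 := by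
  intro a b hab
  have h1 : (OrderDual.ofDual b) < (OrderDual.ofDual a) := hab
  rw [sum_Jcc_dual]
  calc ∑ w ∈ Jcc (OrderDual.ofDual b) (OrderDual.ofDual a),
        (-1 : ℤ) ^ (dualRank σ N (OrderDual.toDual w))
      = ∑ w ∈ Jcc (OrderDual.ofDual b) (OrderDual.ofDual a), (-1 : ℤ) ^ N * (-1) ^ (σ w) := by
        apply Finset.sum_congr rfl
        intro w _
        exact neg_one_pow_sub (hN w)
    _ = 0 := by rw [← Finset.mul_sum, hE h1, mul_zero]

lemma reflect_gD (hmono : ∀ ⦃x y : β⦄, x < y → σ x < σ y)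
    (hE : ∀ ⦃x y : β⦄, x < y → ∑ z ∈ Jcc x y, (-1 : ℤ) ^ (σ z) = 0)
    (hN : ∀ z, σ z ≤ N) {x y : β} (hxy : x ≤ y) :
    reflect (σ y - σ x) (gD σ N x y)
      = ∑ z ∈ Jcc x y, gD σ N x z * (X - 1) ^ (σ y - σ z) := by
  have hyx : OrderDual.toDual y ≤ OrderDual.toDual x := hxy
  have hrank : dualRank σ N (OrderDual.toDual x) - dualRank σ N (OrderDual.toDual y)
      = σ y - σ x := by
    have h1 := hN x; have h2 := hN y
    have h3 := rank_le_of_le σ hmono hxy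
    show N - σ x - (N - σ y) = σ y - σ x
    omega
  have base := reflect_gPoly (dualRank σ N) (dmono σ N hmono hN) (dE σ N hE hN)
    (σ y - σ x) (OrderDual.toDual y) (OrderDual.toDual x) hyx hrank
  rw [sum_Jcc_dual] at base
  simp only [OrderDual.ofDual_toDual] at base
  rw [gD, base]
  apply Finset.sum_congr rfl
  intro w hw
  rw [mem_Jcc] at hw
  have h1 := hN w; have h2 := hN y
  have h3 := rank_le_of_le σ hmono hw.2
  have he : dualRank σ N (OrderDual.toDual w) - dualRank σ N (OrderDual.toDual y)
      = σ y - σ w := by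
    show N - σ w - (N - σ y) = σ y - σ w
    omega
  rw [he]
  exact mul_comm _ _

lemma bnd_gD (hmono : ∀ ⦃x y : β⦄, x < y → σ x < σ y) (hN : ∀ z, σ z ≤ N)
    {x y : β} (h : x < y) : Bnd (gD σ N x y) (σ y - σ x) := by
  have hyx : OrderDual.toDual y < OrderDual.toDual x := h
  have hb := bnd_gPoly (dualRank σ N) (dmono σ N hmono hN) hyx
  have he : dualRank σ N (OrderDual.toDual x) - dualRank σ N (OrderDual.toDual y)
      = σ y - σ x := by
    have h1 := hN x; have h2 := hN y
    have h3 := rank_le_of_le σ hmono h.le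
    show N - σ x - (N - σ y) = σ y - σ x
    omega
  rw [he] at hb
  exact hb

lemma natDegree_gD_le (hmono : ∀ ⦃x y : β⦄, x < y → σ x < σ y) (hN : ∀ z, σ z ≤ N)
    {x y : β} (h : x ≤ y) : (gD σ N x y).natDegree ≤ σ y - σ x := by
  rcases eq_or_lt_of_le h with rfl | h
  · simp [gD_self]
  · exact (bnd_gD σ N hmono hN h).natDegree_le

end
end StanleyConv

namespace StanleyConv
section
variable {β : Type*} [PartialOrder β] [Fintype β]
open Polynomial Finset
open scoped Classical

variable (σ : β → ℕ) (N : ℕ)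

lemma eq_zero_of_reflect_self {p : Polynomial ℤ} {n : ℕ} (hn : 1 ≤ n) (hb : Bnd p n)
    (hr : reflect n p = p) : p = 0 := by
  ext i
  rw [coeff_zero]
  by_cases h1 : n ≤ 2 * i
  · exact hb i h1
  · have hin : i ≤ n := by omega
    have h2 := congrArg (fun q => Polynomial.coeff q i) hr
    simp only [coeff_reflect, Polynomial.revAt_le hin] at h2
    rw [← h2]
    exact hb (n - i) (by omega)

lemma bnd_term (hmono : ∀ ⦃x y : β⦄, x < y → σ x < σ y) (hN : ∀ z, σ z ≤ N)
    {x y z : β} (hlt : x < y) (h1 : x ≤ z) (h2 : z ≤ y) :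
    Bnd (gD σ N x z * gPoly σ z y) (σ y - σ x) := by
  have hr1 := rank_le_of_le σ hmono h1
  have hr2 := rank_le_of_le σ hmono h2
  rcases eq_or_lt_of_le h1 with rfl | hx
  · rw [gD_self, one_mul]
    exact bnd_gPoly σ hmono hlt
  · rcases eq_or_lt_of_le h2 with rfl | hy
    · rw [gPoly_self, mul_one]
      exact bnd_gD σ N hmono hN hx
    · have hb := (bnd_gD σ N hmono hN hx).mul (bnd_gPoly σ hmono hy)
        (by have := hmono hx; omega) (by have := hmono hy; omega)
      exact hb.mono (by omega)

lemma bnd_term' (hmono : ∀ ⦃x y : β⦄, x < y → σ x < σ y) (hN : ∀ z, σ z ≤ N)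
    {x y z : β} (hlt : x < y) (h1 : x ≤ z) (h2 : z ≤ y) :
    Bnd (gPoly σ x z * gD σ N z y) (σ y - σ x) := by
  have hr1 := rank_le_of_le σ hmono h1
  have hr2 := rank_le_of_le σ hmono h2
  rcases eq_or_lt_of_le h1 with rfl | hx
  · rw [gPoly_self, one_mul]
    exact bnd_gD σ N hmono hN hlt
  · rcases eq_or_lt_of_le h2 with rfl | hy
    · rw [gD_self, mul_one]
      exact bnd_gPoly σ hmono hx
    · have hb := (bnd_gPoly σ hmono hx).mul (bnd_gD σ N hmono hN hy)
        (by have := hmono hx; omega) (by have := hmono hy; omega)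
      exact hb.mono (by omega)

lemma euler_sub (hmono : ∀ ⦃x y : β⦄, x < y → σ x < σ y)
    (hE : ∀ ⦃x y : β⦄, x < y → ∑ z ∈ Jcc x y, (-1 : ℤ) ^ (σ z) = 0)
    {x v w : β} (hxv : x ≤ v) (hvw : v ≤ w) :
    ∑ z ∈ Jcc v w, (-1 : ℤ) ^ (σ z - σ x) = if v = w then (-1) ^ (σ v - σ x) else 0 := by
  calc ∑ z ∈ Jcc v w, (-1 : ℤ) ^ (σ z - σ x)
      = ∑ z ∈ Jcc v w, (-1 : ℤ) ^ (σ z) * (-1) ^ (σ x) := by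
        apply Finset.sum_congr rfl
        intro z hz; rw [mem_Jcc] at hz
        exact neg_one_pow_sub (rank_le_of_le σ hmono (hxv.trans hz.1))
    _ = (∑ z ∈ Jcc v w, (-1 : ℤ) ^ (σ z)) * (-1) ^ (σ x) := (Finset.sum_mul _ _ _).symm
    _ = (if v = w then (-1 : ℤ) ^ (σ v) else 0) * (-1) ^ (σ x) := by
        rw [euler_Jcc σ hE hvw]
    _ = if v = w then (-1 : ℤ) ^ (σ v - σ x) else 0 := by
        by_cases h : v = w
        · rw [if_pos h, if_pos h, ← neg_one_pow_sub (rank_le_of_le σ hmono hxv)]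
        · rw [if_neg h, if_neg h, zero_mul]

lemma euler_sub' (hmono : ∀ ⦃x y : β⦄, x < y → σ x < σ y)
    (hE : ∀ ⦃x y : β⦄, x < y → ∑ z ∈ Jcc x y, (-1 : ℤ) ^ (σ z) = 0)
    {v w y : β} (hvw : v ≤ w) (hwy : w ≤ y) :
    ∑ z ∈ Jcc v w, (-1 : ℤ) ^ (σ y - σ z) = if v = w then (-1) ^ (σ y - σ v) else 0 := by
  calc ∑ z ∈ Jcc v w, (-1 : ℤ) ^ (σ y - σ z)
      = ∑ z ∈ Jcc v w, (-1 : ℤ) ^ (σ y) * (-1) ^ (σ z) := by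
        apply Finset.sum_congr rfl
        intro z hz; rw [mem_Jcc] at hz
        exact neg_one_pow_sub (rank_le_of_le σ hmono (hz.2.trans hwy))
    _ = (-1 : ℤ) ^ (σ y) * (∑ z ∈ Jcc v w, (-1 : ℤ) ^ (σ z)) := (Finset.mul_sum _ _ _).symm
    _ = (-1 : ℤ) ^ (σ y) * (if v = w then (-1 : ℤ) ^ (σ v) else 0) := by
        rw [euler_Jcc σ hE hvw]
    _ = if v = w then (-1 : ℤ) ^ (σ y - σ v) else 0 := by
        by_cases h : v = w
        · rw [if_pos h, if_pos h, ← neg_one_pow_sub (rank_le_of_le σ hmono (hvw.trans hwy))]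
        · rw [if_neg h, if_neg h, mul_zero]

/-- Second convolution: `Σ_z (-1)^{ρz-ρx} g*([x,z]) g([z,y]) = 0` for `x < y`. -/
lemma conv2 (hmono : ∀ ⦃x y : β⦄, x < y → σ x < σ y)
    (hE : ∀ ⦃x y : β⦄, x < y → ∑ z ∈ Jcc x y, (-1 : ℤ) ^ (σ z) = 0)
    (hN : ∀ z, σ z ≤ N) {x y : β} (hlt : x < y) :
    ∑ z ∈ Jcc x y, C ((-1 : ℤ) ^ (σ z - σ x)) * (gD σ N x z * gPoly σ z y) = 0 := by
  have hn1 : 1 ≤ σ y - σ x := by have := hmono hlt; omega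
  set n := σ y - σ x with hn
  apply eq_zero_of_reflect_self hn1
  · apply bnd_sum
    intro z hz; rw [mem_Jcc] at hz
    exact Bnd.C_mul _ (bnd_term σ N hmono hN hlt hz.1 hz.2)
  · rw [reflect_sum]
    have expand : ∀ z ∈ Jcc x y,
        reflect n (C ((-1 : ℤ) ^ (σ z - σ x)) * (gD σ N x z * gPoly σ z y))
        = ∑ v ∈ Jcc x z, ∑ w ∈ Jcc z y,
            C ((-1 : ℤ) ^ (σ z - σ x)) *
              ((gD σ N x v * (X - 1) ^ (σ z - σ v)) *
               ((X - 1) ^ (σ w - σ z) * gPoly σ w y)) := by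
      intro z hz; rw [mem_Jcc] at hz
      have ha1 := rank_le_of_le σ hmono hz.1
      have ha2 := rank_le_of_le σ hmono hz.2
      rw [reflect_C_mul, show n = (σ z - σ x) + (σ y - σ z) by omega,
        reflect_mul _ _ (natDegree_gD_le σ N hmono hN hz.1) (natDegree_gPoly_le σ hmono hz.2),
        reflect_gD σ N hmono hE hN hz.1,
        reflect_gPoly σ hmono hE (σ y - σ z) z y hz.2 rfl,
        Finset.sum_mul_sum, Finset.mul_sum]
      apply Finset.sum_congr rfl
      intro v _
      rw [Finset.mul_sum]
    rw [Finset.sum_congr rfl expand]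
    -- swap z and v
    rw [Finset.sum_comm' (t' := Jcc x y) (s' := fun v => Jcc v y) (by
      intro z v
      simp only [mem_Jcc]
      constructor
      · rintro ⟨⟨h1, h2⟩, h3, h4⟩
        exact ⟨⟨h4, h2⟩, h3, h4.trans h2⟩
      · rintro ⟨⟨h1, h2⟩, h3, h4⟩
        exact ⟨⟨h3.trans h1, h2⟩, h3, h1⟩)]
    apply Finset.sum_congr rfl
    intro v hv
    have hv' := mem_Jcc.mp hv
    -- swap z and w
    rw [Finset.sum_comm' (t' := Jcc v y) (s' := fun w => Jcc v w) (by
      intro z w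
      simp only [mem_Jcc]
      constructor
      · rintro ⟨⟨h1, h2⟩, h3, h4⟩
        exact ⟨⟨h1, h3⟩, h1.trans h3, h4⟩
      · rintro ⟨⟨h1, h2⟩, h3, h4⟩
        exact ⟨⟨h1, h2.trans h4⟩, h2, h4⟩)]
    have hside : ∀ w ∈ Jcc v y, w ≠ v →
        (∑ z ∈ Jcc v w, C ((-1 : ℤ) ^ (σ z - σ x)) *
          ((gD σ N x v * (X - 1) ^ (σ z - σ v)) *
           ((X - 1) ^ (σ w - σ z) * gPoly σ w y))) = 0 := by
      intro w hw hne
      rw [mem_Jcc] at hw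
      have key : (∑ z ∈ Jcc v w, C ((-1 : ℤ) ^ (σ z - σ x)) *
          ((gD σ N x v * (X - 1) ^ (σ z - σ v)) *
           ((X - 1) ^ (σ w - σ z) * gPoly σ w y)))
          = C (∑ z ∈ Jcc v w, (-1 : ℤ) ^ (σ z - σ x)) *
            (gD σ N x v * ((X - 1) ^ (σ w - σ v) * gPoly σ w y)) := by
        rw [map_sum, Finset.sum_mul]
        apply Finset.sum_congr rfl
        intro z hz; rw [mem_Jcc] at hz
        have hb1 := rank_le_of_le σ hmono hz.1
        have hb2 := rank_le_of_le σ hmono hz.2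
        rw [show σ w - σ v = (σ z - σ v) + (σ w - σ z) by omega, pow_add]
        ring
      rw [key, euler_sub σ hmono hE hv'.1 hw.1, if_neg (fun h => hne h.symm), map_zero,
        zero_mul]
    rw [Finset.sum_eq_single_of_mem v (mem_Jcc.mpr ⟨le_rfl, hv'.2⟩) hside, Jcc_self,
      Finset.sum_singleton]
    simp only [Nat.sub_self, pow_zero, one_mul, mul_one]

/-- First convolution: `Σ_z (-1)^{ρy-ρz} g([x,z]) g*([z,y]) = 0` for `x < y`. -/
lemma conv1 (hmono : ∀ ⦃x y : β⦄, x < y → σ x < σ y)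
    (hE : ∀ ⦃x y : β⦄, x < y → ∑ z ∈ Jcc x y, (-1 : ℤ) ^ (σ z) = 0)
    (hN : ∀ z, σ z ≤ N) :
    ∀ n : ℕ, ∀ x y : β, x < y → σ y - σ x = n →
    ∑ z ∈ Jcc x y, C ((-1 : ℤ) ^ (σ y - σ z)) * (gPoly σ x z * gD σ N z y) = 0 := by
  intro n
  induction n using Nat.strong_induction_on with
  | _ n ih =>
  intro x y hlt hn
  have hn1 : 1 ≤ n := by have := hmono hlt; omega
  apply eq_zero_of_reflect_self hn1
  · apply bnd_sum
    intro z hz; rw [mem_Jcc] at hz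
    exact hn ▸ Bnd.C_mul _ (bnd_term' σ N hmono hN hlt hz.1 hz.2)
  · rw [reflect_sum]
    have expand : ∀ z ∈ Jcc x y,
        reflect n (C ((-1 : ℤ) ^ (σ y - σ z)) * (gPoly σ x z * gD σ N z y))
        = ∑ v ∈ Jcc x z, ∑ w ∈ Jcc z y,
            C ((-1 : ℤ) ^ (σ y - σ z)) *
              (((X - 1) ^ (σ v - σ x) * gPoly σ v z) *
               (gD σ N z w * (X - 1) ^ (σ y - σ w))) := by
      intro z hz; rw [mem_Jcc] at hz
      have ha1 := rank_le_of_le σ hmono hz.1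
      have ha2 := rank_le_of_le σ hmono hz.2
      rw [reflect_C_mul, show n = (σ z - σ x) + (σ y - σ z) by omega,
        reflect_mul _ _ (natDegree_gPoly_le σ hmono hz.1) (natDegree_gD_le σ N hmono hN hz.2),
        reflect_gPoly σ hmono hE (σ z - σ x) x z hz.1 rfl,
        reflect_gD σ N hmono hE hN hz.2,
        Finset.sum_mul_sum, Finset.mul_sum]
      apply Finset.sum_congr rfl
      intro v _
      rw [Finset.mul_sum]
    rw [Finset.sum_congr rfl expand]
    -- swap z and v
    rw [Finset.sum_comm' (t' := Jcc x y) (s' := fun v => Jcc v y) (by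
      intro z v
      simp only [mem_Jcc]
      constructor
      · rintro ⟨⟨h1, h2⟩, h3, h4⟩
        exact ⟨⟨h4, h2⟩, h3, h4.trans h2⟩
      · rintro ⟨⟨h1, h2⟩, h3, h4⟩
        exact ⟨⟨h3.trans h1, h2⟩, h3, h1⟩)]
    have swap2 : ∀ v ∈ Jcc x y,
        (∑ z ∈ Jcc v y, ∑ w ∈ Jcc z y,
          C ((-1 : ℤ) ^ (σ y - σ z)) *
            (((X - 1) ^ (σ v - σ x) * gPoly σ v z) *
             (gD σ N z w * (X - 1) ^ (σ y - σ w))))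
        = ∑ w ∈ Jcc v y, ∑ z ∈ Jcc v w,
          C ((-1 : ℤ) ^ (σ y - σ z)) *
            (((X - 1) ^ (σ v - σ x) * gPoly σ v z) *
             (gD σ N z w * (X - 1) ^ (σ y - σ w))) := by
      intro v _
      apply Finset.sum_comm' (by
        intro z w
        simp only [mem_Jcc]
        constructor
        · rintro ⟨⟨h1, h2⟩, h3, h4⟩
          exact ⟨⟨h1, h3⟩, h1.trans h3, h4⟩
        · rintro ⟨⟨h1, h2⟩, h3, h4⟩
          exact ⟨⟨h1, h2.trans h4⟩, h2, h4⟩)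
    rw [Finset.sum_congr rfl swap2]
    have inner_eq : ∀ v ∈ Jcc x y, ∀ w ∈ Jcc v y,
        (∑ z ∈ Jcc v w,
          C ((-1 : ℤ) ^ (σ y - σ z)) *
            (((X - 1) ^ (σ v - σ x) * gPoly σ v z) *
             (gD σ N z w * (X - 1) ^ (σ y - σ w))))
        = (if v = w then (X - 1) ^ n * C ((-1 : ℤ) ^ (σ y - σ v)) else 0) +
          (if v = x then (if w = y then
            (∑ z ∈ Jcc x y, C ((-1 : ℤ) ^ (σ y - σ z)) * (gPoly σ x z * gD σ N z y))
            else 0) else 0) := by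
      intro v hv w hw
      rw [mem_Jcc] at hv hw
      have hb1 := rank_le_of_le σ hmono hv.1
      have hb2 := rank_le_of_le σ hmono hv.2
      have hb3 := rank_le_of_le σ hmono hw.2
      by_cases hvw : v = w
      · subst hvw
        have h2 : (if v = x then (if v = y then
            (∑ z ∈ Jcc x y, C ((-1 : ℤ) ^ (σ y - σ z)) * (gPoly σ x z * gD σ N z y))
            else 0) else 0) = 0 := by
          by_cases h3 : v = x
          · subst h3
            rw [if_pos rfl, if_neg hlt.ne]
          · rw [if_neg h3]
        rw [h2, add_zero, if_pos rfl, Jcc_self, Finset.sum_singleton, gPoly_self, gD_self,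
          show n = (σ v - σ x) + (σ y - σ v) by omega, pow_add]
        ring
      · rw [if_neg hvw]
        have hvw' : v < w := lt_of_le_of_ne hw.1 hvw
        by_cases hxy2 : v = x ∧ w = y
        · rw [if_pos hxy2.1, if_pos hxy2.2, zero_add]
          obtain ⟨rfl, rfl⟩ := hxy2
          apply Finset.sum_congr rfl
          intro z hz
          simp only [Nat.sub_self, pow_zero, one_mul, mul_one]
        · have hsecond : (if v = x then (if w = y then
              (∑ z ∈ Jcc x y, C ((-1 : ℤ) ^ (σ y - σ z)) * (gPoly σ x z * gD σ N z y))
              else 0) else 0) = 0 := by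
            by_cases h3 : v = x
            · rw [if_pos h3, if_neg (fun h4 => hxy2 ⟨h3, h4⟩)]
            · rw [if_neg h3]
          rw [hsecond, zero_add]
          have hrank : σ w - σ v < n := by
            rcases eq_or_lt_of_le hv.1 with rfl | hxv
            · have hwy : w < y := lt_of_le_of_ne hw.2 (fun h => hxy2 ⟨rfl, h⟩)
              have := hmono hwy
              omega
            · have := hmono hxv
              omega
          have key : (∑ z ∈ Jcc v w,
              C ((-1 : ℤ) ^ (σ y - σ z)) *
                (((X - 1) ^ (σ v - σ x) * gPoly σ v z) *
                 (gD σ N z w * (X - 1) ^ (σ y - σ w))))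
              = ((X - 1) ^ (σ v - σ x) * ((X - 1) ^ (σ y - σ w) * C ((-1 : ℤ) ^ (σ y - σ w)))) *
                (∑ z ∈ Jcc v w, C ((-1 : ℤ) ^ (σ w - σ z)) * (gPoly σ v z * gD σ N z w)) := by
            rw [Finset.mul_sum]
            apply Finset.sum_congr rfl
            intro z hz; rw [mem_Jcc] at hz
            have hc1 := rank_le_of_le σ hmono hz.1
            have hc2 := rank_le_of_le σ hmono hz.2
            rw [show σ y - σ z = (σ y - σ w) + (σ w - σ z) by omega, pow_add, map_mul]
            ring
          rw [key, ih (σ w - σ v) hrank v w hvw' rfl, mul_zero]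
    calc ∑ v ∈ Jcc x y, ∑ w ∈ Jcc v y, ∑ z ∈ Jcc v w,
          C ((-1 : ℤ) ^ (σ y - σ z)) *
            (((X - 1) ^ (σ v - σ x) * gPoly σ v z) *
             (gD σ N z w * (X - 1) ^ (σ y - σ w)))
        = ∑ v ∈ Jcc x y,
            ((∑ w ∈ Jcc v y, if v = w then (X - 1) ^ n * C ((-1 : ℤ) ^ (σ y - σ v)) else 0) +
             (∑ w ∈ Jcc v y, if v = x then (if w = y then
               (∑ z ∈ Jcc x y, C ((-1 : ℤ) ^ (σ y - σ z)) * (gPoly σ x z * gD σ N z y))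
               else 0) else 0)) := by
          apply Finset.sum_congr rfl
          intro v hv
          rw [← Finset.sum_add_distrib]
          exact Finset.sum_congr rfl (fun w hw => inner_eq v hv w hw)
      _ = (∑ v ∈ Jcc x y, (X - 1) ^ n * C ((-1 : ℤ) ^ (σ y - σ v))) +
          (∑ v ∈ Jcc x y, if v = x then
            (∑ z ∈ Jcc x y, C ((-1 : ℤ) ^ (σ y - σ z)) * (gPoly σ x z * gD σ N z y))
            else 0) := by
          rw [Finset.sum_add_distrib]
          congr 1
          · apply Finset.sum_congr rfl
            intro v hv
            have hv' := mem_Jcc.mp hv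
            rw [Finset.sum_ite_eq (Jcc v y) v _, if_pos (mem_Jcc.mpr ⟨le_rfl, hv'.2⟩)]
          · apply Finset.sum_congr rfl
            intro v hv
            have hv' := mem_Jcc.mp hv
            by_cases h3 : v = x
            · simp only [if_pos h3]
              rw [Finset.sum_ite_eq' (Jcc v y) y _, if_pos (mem_Jcc.mpr ⟨hv'.2, le_rfl⟩)]
            · simp only [if_neg h3, Finset.sum_const_zero]
      _ = ∑ z ∈ Jcc x y, C ((-1 : ℤ) ^ (σ y - σ z)) * (gPoly σ x z * gD σ N z y) := by
          rw [Finset.sum_ite_eq' (Jcc x y) x _, if_pos (mem_Jcc.mpr ⟨le_rfl, hlt.le⟩)]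
          have hz : ∑ v ∈ Jcc x y, ((-1 : ℤ)) ^ (σ y - σ v) = 0 := by
            calc ∑ v ∈ Jcc x y, ((-1 : ℤ)) ^ (σ y - σ v)
                = ∑ v ∈ Jcc x y, (-1 : ℤ) ^ (σ y) * (-1) ^ (σ v) := by
                  apply Finset.sum_congr rfl
                  intro v hv; rw [mem_Jcc] at hv
                  exact neg_one_pow_sub (rank_le_of_le σ hmono hv.2)
              _ = (-1 : ℤ) ^ (σ y) * ∑ v ∈ Jcc x y, (-1 : ℤ) ^ (σ v) :=
                  (Finset.mul_sum _ _ _).symm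
              _ = 0 := by rw [hE hlt, mul_zero]
          rw [← Finset.mul_sum, ← map_sum, hz, map_zero, mul_zero, zero_add]

end
end StanleyConv

namespace StanleyConv
section
variable {β : Type*} [PartialOrder β] [Fintype β]
open Polynomial Finset
open scoped Classical

lemma exists_cover {x y : β} (h : x < y) : ∃ z, x ⋖ z ∧ z ≤ y := by
  obtain ⟨z, hz, hmin⟩ := (Joc x y).exists_minimal ⟨y, mem_Joc.mpr ⟨h, le_rfl⟩⟩
  rw [mem_Joc] at hz
  exact ⟨z, ⟨hz.1, fun c hc1 hc2 => hc2.not_ge (hmin (mem_Joc.mpr ⟨hc1, hc2.le.trans hz.2⟩) hc2.le)⟩, hz.2⟩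

lemma mono_of_cov (σ : β → ℕ) (hcov : ∀ x y : β, x ⋖ y → σ y = σ x + 1) :
    ∀ ⦃x y : β⦄, x < y → σ x < σ y := by
  suffices H : ∀ n : ℕ, ∀ x y : β, x < y → (Joc x y).card ≤ n → σ x < σ y by
    intro x y h
    exact H (Joc x y).card x y h le_rfl
  intro n
  induction n with
  | zero =>
    intro x y h hc
    have hy : y ∈ Joc x y := mem_Joc.mpr ⟨h, le_rfl⟩
    have := Finset.card_pos.mpr ⟨y, hy⟩
    omega
  | succ k ih =>
    intro x y h hc
    obtain ⟨z, hzc, hzy⟩ := exists_cover h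
    have hz := hcov x z hzc
    rcases eq_or_lt_of_le hzy with rfl | hzy'
    · omega
    · have hsub : Joc z y ⊆ Joc x y := by
        intro w hw
        rw [mem_Joc] at *
        exact ⟨lt_trans hzc.lt hw.1, hw.2⟩
      have hzmem : z ∈ Joc x y := mem_Joc.mpr ⟨hzc.lt, hzy⟩
      have hznot : z ∉ Joc z y := by simp
      have hlt2 : (Joc z y).card < (Joc x y).card :=
        Finset.card_lt_card ((Finset.ssubset_iff_of_subset hsub).mpr
          ⟨z, hzmem, hznot⟩)
      have := ih z y hzy' (by omega)
      omega

lemma hE_of_ncard (σ : β → ℕ)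
    (hEuler : ∀ x y : β, x < y →
      {z : β | x ≤ z ∧ z ≤ y ∧ Even (σ z)}.ncard =
      {z : β | x ≤ z ∧ z ≤ y ∧ ¬ Even (σ z)}.ncard) :
    ∀ ⦃x y : β⦄, x < y → ∑ z ∈ Jcc x y, (-1 : ℤ) ^ (σ z) = 0 := by
  intro x y h
  have h1 := hEuler x y h
  have e1 : {z : β | x ≤ z ∧ z ≤ y ∧ Even (σ z)}
      = ↑((Jcc x y).filter (fun z => Even (σ z))) := by
    ext z; simp [mem_Jcc, and_assoc]
  have e2 : {z : β | x ≤ z ∧ z ≤ y ∧ ¬ Even (σ z)}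
      = ↑((Jcc x y).filter (fun z => ¬ Even (σ z))) := by
    ext z; simp [mem_Jcc, and_assoc]
  rw [e1, e2, Set.ncard_coe_finset, Set.ncard_coe_finset] at h1
  rw [← Finset.sum_filter_add_sum_filter_not (Jcc x y) (fun z => Even (σ z))]
  have hA : ∑ z ∈ (Jcc x y).filter (fun z => Even (σ z)), ((-1 : ℤ)) ^ (σ z)
      = ((Jcc x y).filter (fun z => Even (σ z))).card := by
    rw [Finset.sum_congr rfl (fun z hz => Even.neg_one_pow (Finset.mem_filter.mp hz).2),
      Finset.sum_const, nsmul_eq_mul, mul_one]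
  have hB : ∑ z ∈ (Jcc x y).filter (fun z => ¬ Even (σ z)), ((-1 : ℤ)) ^ (σ z)
      = -((Jcc x y).filter (fun z => ¬ Even (σ z))).card := by
    rw [Finset.sum_congr rfl (fun z hz =>
      Odd.neg_one_pow (Nat.not_even_iff_odd.mp (Finset.mem_filter.mp hz).2)),
      Finset.sum_const, nsmul_eq_mul, mul_neg_one]
  rw [hA, hB, h1]
  ring

lemma C_neg_one_pow (k : ℕ) : (C ((-1 : ℤ) ^ k) : Polynomial ℤ) = (-1 : Polynomial ℤ) ^ k := by
  rw [map_pow, map_neg, map_one]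

end
end StanleyConv


open StanleyConv Polynomial Finset OrderDual

/-- **Paragraph 2.4 (2), Stanley's convolution property.**  Let `𝒫` be an
Eulerian poset of rank `d > 0` with minimal element `⊥` and maximal element
`⊤`.  Then `Σ_{⊥ ≤ x ≤ ⊤} (-1)^{ρ(⊤)-ρ(x)} g([⊥,x],t)·g([x,⊤]*,t) = 0` and
likewise `Σ_{⊥ ≤ x ≤ ⊤} (-1)^{ρ(x)-ρ(⊥)} g([⊥,x]*,t)·g([x,⊤],t) = 0`. -/
theorem gPoly_convolution {α : Type*} [PartialOrder α] [Fintype α] [BoundedOrder α]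
    (ρ : α → ℕ) (d : ℕ) (hd : 0 < d)
    (hbot : ρ ⊥ = 0) (htop : ρ ⊤ = d)
    (hcov : ∀ x y : α, x ⋖ y → ρ y = ρ x + 1)
    (hEuler : ∀ x y : α, x < y →
      {z : α | x ≤ z ∧ z ≤ y ∧ Even (ρ z)}.ncard =
      {z : α | x ≤ z ∧ z ≤ y ∧ ¬ Even (ρ z)}.ncard) :
    (∑ x : α, (-1 : Polynomial ℤ) ^ (ρ (⊤ : α) - ρ x) *
        (gPoly ρ (⊥ : α) x * gPolyDual ρ x (⊤ : α)) = 0) ∧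
    (∑ x : α, (-1 : Polynomial ℤ) ^ (ρ x - ρ (⊥ : α)) *
        (gPolyDual ρ (⊥ : α) x * gPoly ρ x (⊤ : α)) = 0) := by
    classical
  have hmono : ∀ ⦃x y : α⦄, x < y → ρ x < ρ y := mono_of_cov ρ hcov
  have hE : ∀ ⦃x y : α⦄, x < y → ∑ z ∈ Jcc x y, (-1 : ℤ) ^ (ρ z) = 0 :=
    hE_of_ncard ρ hEuler
  have hN : ∀ z : α, ρ z ≤ d := by
    intro z
    have := rank_le_of_le ρ hmono (le_top : z ≤ ⊤)
    omega
  have hbt : (⊥ : α) < ⊤ := by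
    apply lt_of_le_of_ne bot_le
    intro h
    rw [← h, hbot] at htop
    omega
  have hJ : Jcc (⊥ : α) (⊤ : α) = Finset.univ := by
    ext z; simp [mem_Jcc]
  -- identification of gPolyDual with gD
  have hDtop : ∀ x : α, gPolyDual ρ x ⊤ = gD ρ d x ⊤ := by
    intro x
    simp only [gPolyDual, gD, dualRank, htop]
    rfl
  have hDbot : ∀ x : α, gPolyDual ρ ⊥ x = gD ρ d ⊥ x := by
    intro x
    apply gPoly_congr
    · intro z w h1 h2 h3
      have hzx : OrderDual.ofDual z ≤ x := h1
      have hwz : OrderDual.ofDual w ≤ OrderDual.ofDual z := h2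
      have r1 := rank_le_of_le ρ hmono hzx
      have r2 := rank_le_of_le ρ hmono hwz
      have r3 := hN x
      show ρ x - ρ (OrderDual.ofDual w) - (ρ x - ρ (OrderDual.ofDual z))
          = d - ρ (OrderDual.ofDual w) - (d - ρ (OrderDual.ofDual z))
      omega
    · exact (bot_le : (⊥ : α) ≤ x)
  constructor
  · have h0 := conv1 ρ d hmono hE hN (ρ (⊤ : α) - ρ (⊥ : α)) ⊥ ⊤ hbt rfl
    calc ∑ x : α, (-1 : Polynomial ℤ) ^ (ρ (⊤ : α) - ρ x) *
          (gPoly ρ (⊥ : α) x * gPolyDual ρ x (⊤ : α))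
        = ∑ z ∈ Jcc (⊥ : α) ⊤, C ((-1 : ℤ) ^ (ρ (⊤ : α) - ρ z)) *
            (gPoly ρ (⊥ : α) z * gD ρ d z ⊤) := by
          rw [hJ]
          apply Finset.sum_congr rfl
          intro z _
          rw [C_neg_one_pow, hDtop z]
      _ = 0 := h0
  · have h0 := conv2 ρ d hmono hE hN hbt
    calc ∑ x : α, (-1 : Polynomial ℤ) ^ (ρ x - ρ (⊥ : α)) *
          (gPolyDual ρ (⊥ : α) x * gPoly ρ x (⊤ : α))
        = ∑ z ∈ Jcc (⊥ : α) ⊤, C ((-1 : ℤ) ^ (ρ z - ρ (⊥ : α))) *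
            (gD ρ d ⊥ z * gPoly ρ z ⊤) := by
          rw [hJ]
          apply Finset.sum_congr rfl
          intro z _
          rw [C_neg_one_pow, hDbot z]
      _ = 0 := h0
end
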